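/- arXiv:1811.06188 — 4 statements merged into one kernel-verified Lean document; each statement's English description precedes it below -/
import Mathlib

section
/- Let X ⊊ ℤ/nℤ be a proper subset. Then: (i) the element h_X^ℵ does not depend on the choice of ℵ ∉ X; call this common element h_X. (ii) ℓ(h_X) = |X|. (iii) A word s_{z_1} s_{z_2} ⋯ s_{z_d} in the simple reflections is a reduced expression for h_X if and only if z_1, …, z_d is an enumeration of X in which each element of X occurs exactly once and, for each connected component of X, the elements of that component appear in the word in decreasing order with respect to the linear order induced by any ℵ ∉ X. (iv) Any two reduced expressions for h_X are related by a sequence of swaps of adjacent letters s_j s_k ↦ s_k s_j with k ∉ {j−1, j+1}. -/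
/-- The Coxeter matrix of affine type `Ã_{n−1}`, with vertex set `ℤ/nℤ`:
`M i i = 1`; for `i ≠ j`, the order `M i j` of `s_i s_j` is `3` if `j = i ± 1` (when `n ≥ 3`),
`∞` (encoded by `0`) when `n = 2` and `i ≠ j`, and `2` otherwise. -/
def affineA (n : ℕ) : CoxeterMatrix (ZMod n) where
  M := Matrix.of fun i j =>
    if i = j then 1
    else if j = i + 1 ∨ i = j + 1 then (if n = 2 then 0 else 3) else 2
  isSymm := by
    unfold Matrix.IsSymm
    ext i j
    simp only [Matrix.transpose_apply, Matrix.of_apply]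
    by_cases h : i = j
    · subst h; simp
    · rw [if_neg h, if_neg (Ne.symm h)]
      exact if_congr or_comm rfl rfl
  diagonal := by intro i; simp
  off_diagonal := by
    intro i j h
    simp only [Matrix.of_apply]
    rw [if_neg h]
    split_ifs <;> omega

/-- The word for `h_X`: writing `X = {x_1 < x_2 < ⋯ < x_d}` in the linear order
`ℵ < ℵ+1 < ⋯ < ℵ−1` on `ℤ/nℤ` (for a chosen `ℵ ∉ X`), this is the list
`[x_d, …, x_2, x_1]`, so that `h_X = s_{x_d} ⋯ s_{x_2} s_{x_1}`. -/
def hWord (n : ℕ) (X : Finset (ZMod n)) (al : ZMod n) : List (ZMod n) :=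
  (((List.range n).map (fun k => al + (k : ZMod n))).filter (fun i => i ∈ X)).reverse

/-- `w` is the longest element of the standard parabolic subgroup generated by
`{s_i : i ∈ I}`. -/
def IsLongestIn {B : Type*} {W : Type*} [Group W] {M : CoxeterMatrix B}
    (cs : CoxeterSystem M W) (I : Finset B) (w : W) : Prop :=
  w ∈ Subgroup.closure (cs.simple '' (I : Set B)) ∧
    ∀ u ∈ Subgroup.closure (cs.simple '' (I : Set B)), cs.length u ≤ cs.length w

/-- `A` is a τ-component (relative to `I`): for every `j ∈ A`, `j+1 ∈ A` iff `j ∈ I`,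
and `j−1 ∈ A` iff `j ∈ J = τ(I)`. -/
def IsTauComponent (n : ℕ) (I A : Finset (ZMod n)) : Prop :=
  ∀ j ∈ A, ((j + 1 ∈ A ↔ j ∈ I) ∧ (j - 1 ∈ A ↔ j ∈ I.image (· + 1)))

/-- The position of `j` in the linear order `b < b+1 < ⋯ < b−1` on `ℤ/nℤ`. -/
def posIn (n : ℕ) (b j : ZMod n) : ℕ := (j - b).val

/-- A single commutation move on words: swap two adjacent letters `j, k`
with `k ∉ {j−1, j+1}`. -/
def CommMove (n : ℕ) (w₁ w₂ : List (ZMod n)) : Prop :=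
  ∃ (l₁ l₂ : List (ZMod n)) (j k : ZMod n), k ≠ j + 1 ∧ k ≠ j - 1 ∧
    w₁ = l₁ ++ j :: k :: l₂ ∧ w₂ = l₁ ++ k :: j :: l₂

/-- `j` and `k` lie in the same connected component of `X`: the equivalence relation
generated by `j ∼ j+1` whenever `j, j+1 ∈ X`. -/
def SameComponent (n : ℕ) (X : Finset (ZMod n)) (j k : ZMod n) : Prop :=
  Relation.EqvGen (fun a b => a ∈ X ∧ b ∈ X ∧ b = a + 1) j k

section Comb

variable {n : ℕ}

/-- `k` is reachable from `j` going upward inside `X`. -/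
def UpTo (X : Finset (ZMod n)) (j k : ZMod n) : Prop :=
  ∃ t : ℕ, k = j + (t : ZMod n) ∧ ∀ u ≤ t, j + (u : ZMod n) ∈ X

lemma upTo_mem_left {X : Finset (ZMod n)} {j k : ZMod n} (h : UpTo X j k) : j ∈ X := by
  obtain ⟨t, -, hall⟩ := h
  simpa using hall 0 (Nat.zero_le t)

lemma upTo_mem_right {X : Finset (ZMod n)} {j k : ZMod n} (h : UpTo X j k) : k ∈ X := by
  obtain ⟨t, rfl, hall⟩ := h
  exact hall t le_rfl

lemma upTo_sameComponent {X : Finset (ZMod n)} {j k : ZMod n} (h : UpTo X j k) :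
    SameComponent n X j k := by
  obtain ⟨t, rfl, hall⟩ := h
  induction t with
  | zero => rw [Nat.cast_zero, add_zero]; exact Relation.EqvGen.refl j
  | succ t ih =>
    have h1 : SameComponent n X j (j + (t : ZMod n)) :=
      ih (fun u hu => hall u (hu.trans (Nat.le_succ t)))
    refine Relation.EqvGen.trans _ _ _ h1 (Relation.EqvGen.rel _ _ ?_)
    refine ⟨hall t (Nat.le_succ t), hall (t+1) le_rfl, ?_⟩
    push_cast
    ring

lemma sameComponent_cases {X : Finset (ZMod n)} {j k : ZMod n} (h : SameComponent n X j k) :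
    j = k ∨ UpTo X j k ∨ UpTo X k j := by
  induction h with
  | rel a b hab =>
    right; left
    refine ⟨1, by push_cast; rw [hab.2.2], fun u hu => ?_⟩
    rcases Nat.le_one_iff_eq_zero_or_eq_one.mp hu with rfl | rfl
    · simpa using hab.1
    · push_cast; rw [← hab.2.2]; exact hab.2.1
  | refl a => left; rfl
  | symm a b _ ih => tauto
  | trans a b c _ _ ih1 ih2 =>
    rcases ih1 with rfl | hab | hba
    · exact ih2
    · rcases ih2 with rfl | hbc | hcb
      · right; left; exact hab
      · -- up a b, up b c
        right; left
        obtain ⟨t1, rfl, h1⟩ := hab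
        obtain ⟨t2, rfl, h2⟩ := hbc
        refine ⟨t1 + t2, by push_cast; ring, fun u hu => ?_⟩
        rcases le_or_gt u t1 with h | h
        · exact h1 u h
        · have : a + (u : ZMod n) = (a + (t1 : ZMod n)) + ((u - t1 : ℕ) : ZMod n) := by
            have : ((u : ℕ) : ZMod n) = ((t1 + (u - t1) : ℕ) : ZMod n) := by
              congr 1; omega
            rw [this]; push_cast; ring
          rw [this]
          exact h2 _ (by omega)
      · -- up a b, up c b
        obtain ⟨t1, hb1, h1⟩ := hab
        obtain ⟨t2, hb2, h2⟩ := hcb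
        rcases le_or_gt t1 t2 with h | h
        · right; right
          refine ⟨t2 - t1, ?_, fun u hu => h2 u (by omega)⟩
          have : a + (t1 : ZMod n) = c + (t2 : ZMod n) := by rw [← hb1, ← hb2]
          have h2' : ((t2 : ℕ) : ZMod n) = ((t1 + (t2 - t1) : ℕ) : ZMod n) := by congr 1; omega
          rw [h2'] at this
          push_cast at this ⊢
          linear_combination this - hb1 + hb1
        · right; left
          refine ⟨t1 - t2, ?_, fun u hu => h1 u (by omega)⟩
          have : a + (t1 : ZMod n) = c + (t2 : ZMod n) := by rw [← hb1, ← hb2]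
          have h1' : ((t1 : ℕ) : ZMod n) = ((t2 + (t1 - t2) : ℕ) : ZMod n) := by congr 1; omega
          rw [h1'] at this
          push_cast at this ⊢
          linear_combination -this
    · rcases ih2 with rfl | hbc | hcb
      · right; right; exact hba
      · -- up b a, up b c
        obtain ⟨t1, hb1, h1⟩ := hba
        obtain ⟨t2, hb2, h2⟩ := hbc
        rcases le_or_gt t1 t2 with h | h
        · right; left
          refine ⟨t2 - t1, ?_, fun u hu => ?_⟩
          · rw [hb1, hb2]
            have : ((t2 : ℕ) : ZMod n) = ((t1 + (t2 - t1) : ℕ) : ZMod n) := by congr 1; omega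
            rw [this]; push_cast; ring
          · rw [hb1]
            have : b + (t1 : ZMod n) + (u : ZMod n) = b + ((t1 + u : ℕ) : ZMod n) := by
              push_cast; ring
            rw [this]
            exact h2 _ (by omega)
        · right; right
          refine ⟨t1 - t2, ?_, fun u hu => ?_⟩
          · rw [hb1, hb2]
            have : ((t1 : ℕ) : ZMod n) = ((t2 + (t1 - t2) : ℕ) : ZMod n) := by congr 1; omega
            rw [this]; push_cast; ring
          · rw [hb2]
            have : b + (t2 : ZMod n) + (u : ZMod n) = b + ((t2 + u : ℕ) : ZMod n) := by
              push_cast; ring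
            rw [this]
            exact h1 _ (by omega)
      · right; right
        obtain ⟨t1, rfl, h1⟩ := hba
        obtain ⟨t2, rfl, h2⟩ := hcb
        refine ⟨t2 + t1, by push_cast; ring, fun u hu => ?_⟩
        rcases le_or_gt u t2 with h | h
        · exact h2 u h
        · have : c + (u : ZMod n) = (c + (t2 : ZMod n)) + ((u - t2 : ℕ) : ZMod n) := by
            have : ((u : ℕ) : ZMod n) = ((t2 + (u - t2) : ℕ) : ZMod n) := by congr 1; omega
            rw [this]; push_cast; ring
          rw [this]
          exact h1 _ (by omega)

end Comb

section Comb2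

variable {n : ℕ} [NeZero n]

lemma posIn_inj {b j k : ZMod n} (h : posIn n b j = posIn n b k) : j = k := by
  have h2 : (((j - b).val : ℕ) : ZMod n) = (((k - b).val : ℕ) : ZMod n) := by
    unfold posIn at h; rw [h]
  rw [ZMod.natCast_rightInverse (j - b), ZMod.natCast_rightInverse (k - b)] at h2
  have h3 := congrArg (· + b) h2
  simpa using h3

lemma zmod_self_eq_add_val {b z : ZMod n} : z = b + ((z - b).val : ZMod n) := by
  rw [ZMod.natCast_rightInverse (z - b)]; ring

lemma upTo_pos {X : Finset (ZMod n)} (hXp : ∃ w : ZMod n, w ∉ X) {j k b : ZMod n}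
    (h : UpTo X j k) (hjk : j ≠ k) (hb : b ∉ X) : posIn n b j < posIn n b k := by
  obtain ⟨t, rfl, hall⟩ := h
  have htn : t < n := by
    by_contra hc
    push_neg at hc
    obtain ⟨w, hw⟩ := hXp
    refine hw ?_
    have : w = j + (((w - j).val : ℕ) : ZMod n) := zmod_self_eq_add_val
    rw [this]
    exact hall _ (le_trans (ZMod.val_lt (w - j)).le hc)
  have ht0 : t ≠ 0 := by
    rintro rfl
    simp at hjk
  have hpn : posIn n b j + t < n := by
    by_contra hc
    push_neg at hc
    set p := posIn n b j with hpdef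
    have hplt : p < n := by
      have := ZMod.val_lt (j - b); unfold posIn at hpdef; omega
    have h2 : n - p ≤ t := by omega
    refine hb ?_
    have hj : j = b + ((p : ℕ) : ZMod n) := zmod_self_eq_add_val
    have key : j + ((n - p : ℕ) : ZMod n) = b := by
      rw [hj, add_assoc, ← Nat.cast_add]
      have hpn' : p + (n - p) = n := by omega
      rw [hpn', ZMod.natCast_self, add_zero]
    rw [← key]
    exact hall _ h2
  have hval : posIn n b (j + (t : ZMod n)) = posIn n b j + t := by
    unfold posIn at *
    have : j + (t : ZMod n) - b = (j - b) + (t : ZMod n) := by ring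
    rw [this, ZMod.val_add_of_lt, ZMod.val_cast_of_lt htn]
    rw [ZMod.val_cast_of_lt htn]
    exact hpn
  omega

lemma sameComponent_symm {X : Finset (ZMod n)} {j k : ZMod n} (h : SameComponent n X j k) :
    SameComponent n X k j := Relation.EqvGen.symm _ _ h

lemma pos_transfer {X : Finset (ZMod n)} (hXp : ∃ w : ZMod n, w ∉ X) {j k b b' : ZMod n}
    (h : SameComponent n X j k) (hjk : j ≠ k) (hb : b ∉ X) (hb' : b' ∉ X)
    (hlt : posIn n b j < posIn n b k) : posIn n b' j < posIn n b' k := by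
  rcases sameComponent_cases h with rfl | hup | hup
  · exact absurd rfl hjk
  · exact upTo_pos hXp hup hjk hb'
  · exact absurd (upTo_pos hXp hup (Ne.symm hjk) hb) (by omega)

lemma sameComponent_mono {X Y : Finset (ZMod n)} (h : X ⊆ Y) {j k : ZMod n}
    (hs : SameComponent n X j k) : SameComponent n Y j k := by
  refine Relation.EqvGen.mono ?_ _ _ hs
  rintro a b ⟨h1, h2, h3⟩
  exact ⟨h h1, h h2, h3⟩

/-- The increasing word: elements of `X` sorted by `posIn b`. -/
def incList (n : ℕ) (X : Finset (ZMod n)) (b : ZMod n) : List (ZMod n) :=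
  ((List.range n).map (fun (k : ℕ) => b + (k : ZMod n))).filter (fun i => i ∈ X)

lemma hWord_eq_reverse (X : Finset (ZMod n)) (b : ZMod n) :
    hWord n X b = (incList n X b).reverse := by
  unfold hWord incList
  congr 1
  show List.filter _ (List.map _ (List.flatMap _ _)) = _
  rw [show (List.flatMap (fun a : ℕ => (pure (a : ZMod n) : List (ZMod n))) (List.range n)) =
      (List.range n).map (fun a : ℕ => (a : ZMod n)) from List.map_eq_flatMap.symm,
    List.map_map]
  rfl

lemma mem_incList {X : Finset (ZMod n)} {b z : ZMod n} : z ∈ incList n X b ↔ z ∈ X := by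
  unfold incList
  rw [List.mem_filter, List.mem_map]
  simp only [List.mem_range, decide_eq_true_eq]
  constructor
  · rintro ⟨-, h⟩; exact h
  · intro h
    exact ⟨⟨(z - b).val, ZMod.val_lt _, zmod_self_eq_add_val.symm⟩, h⟩

lemma mem_hWord {X : Finset (ZMod n)} {b z : ZMod n} : z ∈ hWord n X b ↔ z ∈ X := by
  rw [hWord_eq_reverse, List.mem_reverse]; exact mem_incList

lemma posIn_base_add {b : ZMod n} {k : ℕ} (hk : k < n) : posIn n b (b + (k : ZMod n)) = k := by
  unfold posIn
  rw [add_sub_cancel_left, ZMod.val_cast_of_lt hk]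

lemma pairwise_incList {X : Finset (ZMod n)} {b : ZMod n} :
    (incList n X b).Pairwise (fun a c => posIn n b a < posIn n b c) := by
  unfold incList
  apply List.Pairwise.filter
  rw [List.pairwise_map]
  
  refine List.Pairwise.imp_of_mem ?_ (List.pairwise_lt_range (n := n))
  intro a c ha hc hlt
  rw [List.mem_range] at ha hc
  rw [posIn_base_add ha, posIn_base_add hc]
  exact hlt

lemma nodup_incList {X : Finset (ZMod n)} {b : ZMod n} : (incList n X b).Nodup := by
  refine List.Pairwise.imp ?_ (pairwise_incList (X := X) (b := b))
  intro a c h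
  exact fun hac => by rw [hac] at h; omega

lemma nodup_hWord {X : Finset (ZMod n)} {b : ZMod n} : (hWord n X b).Nodup := by
  rw [hWord_eq_reverse, List.nodup_reverse]; exact nodup_incList

lemma pairwise_hWord {X : Finset (ZMod n)} {b : ZMod n} :
    (hWord n X b).Pairwise (fun a c => posIn n b c < posIn n b a) := by
  rw [hWord_eq_reverse, List.pairwise_reverse]
  exact pairwise_incList

/-- `l` is a valid word for `h_X`. -/
def GoodW (n : ℕ) (X : Finset (ZMod n)) (l : List (ZMod n)) : Prop :=
  l.Nodup ∧ (∀ z : ZMod n, z ∈ l ↔ z ∈ X) ∧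
  ∀ b : ZMod n, b ∉ X → l.Pairwise (fun a c => SameComponent n X a c →
    posIn n b c < posIn n b a)

lemma good_hWord {X : Finset (ZMod n)} {b : ZMod n} (hXp : ∃ w : ZMod n, w ∉ X)
    (hb : b ∉ X) : GoodW n X (hWord n X b) := by
  refine ⟨nodup_hWord, fun z => mem_hWord, fun b' hb' => ?_⟩
  refine List.Pairwise.imp ?_ (pairwise_hWord (X := X) (b := b))
  intro a c hlt hsc
  have hne : c ≠ a := by intro h; rw [h] at hlt; omega
  exact pos_transfer hXp (sameComponent_symm hsc) hne hb hb' hlt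

lemma good_length {X : Finset (ZMod n)} {l : List (ZMod n)} (h : GoodW n X l) :
    l.length = X.card := by
  obtain ⟨hnd, hmem, -⟩ := h
  have : l.toFinset = X := by
    ext z; rw [List.mem_toFinset]; exact hmem z
  rw [← this, List.toFinset_card_of_nodup hnd]

end Comb2

section Comb3

variable {n : ℕ} [NeZero n]

lemma commMove_cons {x : ZMod n} {w1 w2 : List (ZMod n)} (h : CommMove n w1 w2) :
    CommMove n (x :: w1) (x :: w2) := by
  obtain ⟨l1, l2, j, k, h1, h2, rfl, rfl⟩ := h
  exact ⟨x :: l1, l2, j, k, h1, h2, rfl, rfl⟩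

lemma rtg_cons {x : ZMod n} {w1 w2 : List (ZMod n)}
    (h : Relation.ReflTransGen (CommMove n) w1 w2) :
    Relation.ReflTransGen (CommMove n) (x :: w1) (x :: w2) :=
  Relation.ReflTransGen.lift (x :: ·) (fun _ _ => commMove_cons) _ _ h

lemma rtg_move_front {z : ZMod n} {v : List (ZMod n)} :
    ∀ u : List (ZMod n), (∀ a ∈ u, z ≠ a + 1 ∧ z ≠ a - 1) →
    Relation.ReflTransGen (CommMove n) (u ++ z :: v) (z :: (u ++ v)) := by
  intro u
  induction u with
  | nil => intro _; exact Relation.ReflTransGen.refl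
  | cons a u' ih =>
    intro hcond
    have step1 : Relation.ReflTransGen (CommMove n) (a :: (u' ++ z :: v)) (a :: z :: (u' ++ v)) :=
      rtg_cons (ih (fun x hx => hcond x (List.mem_cons_of_mem a hx)))
    refine Relation.ReflTransGen.trans step1 (Relation.ReflTransGen.single ?_)
    exact ⟨[], u' ++ v, a, z, (hcond a (List.mem_cons_self (a := a) (l := u'))).1,
      (hcond a (List.mem_cons_self (a := a) (l := u'))).2, rfl, rfl⟩

lemma good_nodup_pairwise {X : Finset (ZMod n)} {l : List (ZMod n)} (h : GoodW n X l)
    {b : ZMod n} (hb : b ∉ X) :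
    l.Pairwise (fun a c => a ≠ c ∧ (SameComponent n X a c → posIn n b c < posIn n b a)) :=
  List.Pairwise.and (List.Pairwise.imp (fun h => h) h.1) (h.2.2 b hb)

lemma good_remove {X : Finset (ZMod n)} (hXp : ∃ w : ZMod n, w ∉ X) {u v : List (ZMod n)}
    {z : ZMod n} (h : GoodW n X (u ++ z :: v)) : GoodW n (X.erase z) (u ++ v) := by
  obtain ⟨b0, hb0⟩ := hXp
  have hnd := h.1
  have hsub : (u ++ v).Sublist (u ++ z :: v) :=
    List.Sublist.append (List.Sublist.refl u) (List.sublist_cons_self z v)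
  have hndu : (u ++ v).Nodup := hnd.sublist hsub
  have hzX : z ∈ X := (h.2.1 z).mp (by simp)
  have hznotin : z ∉ u ++ v := by
    intro hz
    have : ¬ (u ++ z :: v).Nodup := by
      rcases List.mem_append.mp hz with hz | hz
      · intro hh
        rcases List.pairwise_append.mp hh with ⟨-, h2, h3⟩
        exact (h3 z hz z (by simp)) rfl
      · intro hh
        rcases List.pairwise_append.mp hh with ⟨-, h2, h3⟩
        exact ((List.pairwise_cons.mp h2).1 z hz) rfl
    exact this hnd
  refine ⟨hndu, fun a => ?_, fun b hb => ?_⟩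
  · constructor
    · intro ha
      refine Finset.mem_erase.mpr ⟨?_, ?_⟩
      · rintro rfl; exact hznotin ha
      · exact (h.2.1 a).mp (by
          rcases List.mem_append.mp ha with ha | ha
          · exact List.mem_append.mpr (Or.inl ha)
          · exact List.mem_append.mpr (Or.inr (List.mem_cons_of_mem z ha)))
    · intro ha
      obtain ⟨hane, haX⟩ := Finset.mem_erase.mp ha
      have := (h.2.1 a).mpr haX
      rcases List.mem_append.mp this with ha' | ha'
      · exact List.mem_append.mpr (Or.inl ha')
      · rcases List.mem_cons.mp ha' with rfl | ha'
        · exact absurd rfl hane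
        · exact List.mem_append.mpr (Or.inr ha')
  · have hb0' : b0 ∉ X.erase z := fun hc => hb0 (Finset.mem_of_mem_erase hc)
    have hXp' : ∃ w : ZMod n, w ∉ X.erase z := ⟨z, Finset.notMem_erase z X⟩
    have hpw := (good_nodup_pairwise h hb0).sublist hsub
    refine hpw.imp ?_
    rintro a c ⟨hac, himp⟩ hsc
    have hscX : SameComponent n X a c := sameComponent_mono (Finset.erase_subset z X) hsc
    exact pos_transfer hXp' (sameComponent_symm hsc) (Ne.symm hac) hb0' hb
      (himp hscX)

lemma good_rtg (l' : List (ZMod n)) : ∀ (X : Finset (ZMod n)) (l : List (ZMod n)),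
    (∃ w : ZMod n, w ∉ X) → GoodW n X l → GoodW n X l' →
    Relation.ReflTransGen (CommMove n) l l' := by
  induction l' with
  | nil =>
    intro X l hXp hl hl'
    have : l = [] := by
      rw [List.eq_nil_iff_forall_not_mem]
      intro a ha
      exact (by simpa using (hl'.2.1 a).mpr ((hl.2.1 a).mp ha) : False)
    rw [this]
  | cons z t' ih =>
    intro X l hXp hl hl'
    obtain ⟨b0, hb0⟩ := hXp
    have hzX : z ∈ X := (hl'.2.1 z).mp (by simp)
    have hzl : z ∈ l := (hl.2.1 z).mpr hzX
    obtain ⟨u, v, rfl⟩ := List.append_of_mem hzl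
    -- every element of u commutes with z
    have hcomm : ∀ a ∈ u, z ≠ a + 1 ∧ z ≠ a - 1 := by
      intro a ha
      have haX : a ∈ X := (hl.2.1 a).mp (List.mem_append.mpr (Or.inl ha))
      have hane : a ≠ z := by
        intro hc; subst hc
        rcases List.pairwise_append.mp hl.1 with ⟨-, -, h3⟩
        exact (h3 a ha a (by simp)) rfl
      have hat' : a ∈ t' := by
        have := (hl'.2.1 a).mpr haX
        rcases List.mem_cons.mp this with hc | hc
        · exact absurd hc hane
        · exact hc
      constructor <;> intro hc
      · -- z = a + 1 : same component, contradiction via two orders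
        have hsc : SameComponent n X a z :=
          Relation.EqvGen.rel _ _ ⟨haX, hzX, hc⟩
        have h1 : posIn n b0 z < posIn n b0 a := by
          rcases List.pairwise_append.mp (hl.2.2 b0 hb0) with ⟨-, -, h3⟩
          exact h3 a ha z (by simp) hsc
        have h2 : posIn n b0 a < posIn n b0 z :=
          (List.pairwise_cons.mp (hl'.2.2 b0 hb0)).1 a hat' (sameComponent_symm hsc)
        omega
      · -- z = a - 1, i.e. a = z + 1
        have hsc : SameComponent n X a z := by
          refine sameComponent_symm (Relation.EqvGen.rel _ _ ⟨hzX, haX, ?_⟩)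
          rw [hc]; ring
        have h1 : posIn n b0 z < posIn n b0 a := by
          rcases List.pairwise_append.mp (hl.2.2 b0 hb0) with ⟨-, -, h3⟩
          exact h3 a ha z (by simp) hsc
        have h2 : posIn n b0 a < posIn n b0 z :=
          (List.pairwise_cons.mp (hl'.2.2 b0 hb0)).1 a hat' (sameComponent_symm hsc)
        omega
    have step1 := rtg_move_front u hcomm (z := z) (v := v)
    have hXp' : ∃ w : ZMod n, w ∉ X.erase z := ⟨z, Finset.notMem_erase z X⟩
    have hg1 : GoodW n (X.erase z) (u ++ v) := good_remove ⟨b0, hb0⟩ hl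
    have hg2 : GoodW n (X.erase z) t' := by
      have := good_remove (u := ([] : List (ZMod n))) (v := t') ⟨b0, hb0⟩
        (by simpa using hl')
      simpa using this
    exact Relation.ReflTransGen.trans step1 (rtg_cons (ih _ _ hXp' hg1 hg2))

end Comb3

section Perm

variable {n : ℕ}

/-- The action of the simple reflection `s_i` on `ℤ`. -/
def sigFun (n : ℕ) (i : ZMod n) (x : ℤ) : ℤ :=
  if (x : ZMod n) = i then x + 1 else if (x : ZMod n) = i + 1 then x - 1 else x

lemma one_ne_zero_zmod (hn : 2 ≤ n) : (1 : ZMod n) ≠ 0 := by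
  haveI : NeZero n := ⟨by omega⟩
  intro h
  have : ((1 : ℕ) : ZMod n) = 0 := by exact_mod_cast h
  rw [ZMod.natCast_eq_zero_iff] at this
  have := Nat.le_of_dvd one_pos this
  omega

lemma two_ne_zero_zmod (hn : 3 ≤ n) : (2 : ZMod n) ≠ 0 := by
  haveI : NeZero n := ⟨by omega⟩
  intro h
  have : ((2 : ℕ) : ZMod n) = 0 := by exact_mod_cast h
  rw [ZMod.natCast_eq_zero_iff] at this
  have := Nat.le_of_dvd (by norm_num) this
  omega

lemma add_one_ne_self (hn : 2 ≤ n) (i : ZMod n) : i + 1 ≠ i := by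
  intro h
  have : (1 : ZMod n) = 0 := by linear_combination h
  exact one_ne_zero_zmod hn this

lemma intCast_add_one (x : ℤ) : ((x + 1 : ℤ) : ZMod n) = (x : ZMod n) + 1 := by push_cast; ring

lemma intCast_sub_one (x : ℤ) : ((x - 1 : ℤ) : ZMod n) = (x : ZMod n) - 1 := by push_cast; ring

lemma sigFun_eq1 {i : ZMod n} {x : ℤ} (h : (x : ZMod n) = i) : sigFun n i x = x + 1 :=
  if_pos h

lemma sigFun_eq2 (hn : 2 ≤ n) {i : ZMod n} {x : ℤ} (h : (x : ZMod n) = i + 1) :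
    sigFun n i x = x - 1 := by
  unfold sigFun
  rw [if_neg (by rw [h]; exact add_one_ne_self hn i), if_pos h]

lemma sigFun_eq3 {i : ZMod n} {x : ℤ} (h1 : (x : ZMod n) ≠ i) (h2 : (x : ZMod n) ≠ i + 1) :
    sigFun n i x = x := by
  unfold sigFun
  rw [if_neg h1, if_neg h2]

lemma sigFun_involutive (hn : 2 ≤ n) (i : ZMod n) : Function.Involutive (sigFun n i) := by
  intro x
  by_cases h1 : (x : ZMod n) = i
  · rw [sigFun_eq1 h1, sigFun_eq2 hn (by rw [intCast_add_one, h1])]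
    ring
  · by_cases h2 : (x : ZMod n) = i + 1
    · rw [sigFun_eq2 hn h2, sigFun_eq1 (by rw [intCast_sub_one, h2]; ring)]
      ring
    · rw [sigFun_eq3 h1 h2, sigFun_eq3 h1 h2]

/-- The simple reflection `s_i` as a permutation of `ℤ`. -/
def sigPerm (hn : 2 ≤ n) (i : ZMod n) : Equiv.Perm ℤ :=
  Function.Involutive.toPerm _ (sigFun_involutive hn i)

lemma sigPerm_apply (hn : 2 ≤ n) (i : ZMod n) (x : ℤ) : sigPerm hn i x = sigFun n i x := rfl

lemma sigPerm_mul_self (hn : 2 ≤ n) (i : ZMod n) : sigPerm hn i * sigPerm hn i = 1 := by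
  ext x
  simp only [Equiv.Perm.mul_apply, sigPerm_apply, Equiv.Perm.one_apply]
  exact sigFun_involutive hn i x

lemma sigPerm_inv (hn : 2 ≤ n) (i : ZMod n) : (sigPerm hn i)⁻¹ = sigPerm hn i :=
  inv_eq_of_mul_eq_one_right (sigPerm_mul_self hn i)

lemma sig_comm (hn : 2 ≤ n) {i j : ZMod n} (h1 : j ≠ i) (h2 : j ≠ i + 1) (h3 : i ≠ j + 1) :
    sigPerm hn i * sigPerm hn j = sigPerm hn j * sigPerm hn i := by
  ext x
  simp only [Equiv.Perm.mul_apply, sigPerm_apply]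
  by_cases hj : (x : ZMod n) = j
  · have cx1 : ((x + 1 : ℤ) : ZMod n) = j + 1 := by rw [intCast_add_one, hj]
    have e1 : sigFun n j x = x + 1 := sigFun_eq1 hj
    have e2 : sigFun n i (x + 1) = x + 1 :=
      sigFun_eq3 (by rw [cx1]; exact fun hc => h3 hc.symm)
        (by rw [cx1]; exact fun hc => h1 (add_right_cancel hc))
    have e3 : sigFun n i x = x := sigFun_eq3 (by rw [hj]; exact h1) (by rw [hj]; exact h2)
    rw [e3, e1, e2]
  · by_cases hj2 : (x : ZMod n) = j + 1
    · have cx : ((x - 1 : ℤ) : ZMod n) = j := by rw [intCast_sub_one, hj2]; ring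
      have e1 : sigFun n j x = x - 1 := sigFun_eq2 hn hj2
      have e2 : sigFun n i (x - 1) = x - 1 :=
        sigFun_eq3 (by rw [cx]; exact h1) (by rw [cx]; exact h2)
      have e3 : sigFun n i x = x :=
        sigFun_eq3 (by rw [hj2]; exact fun hc => h3 hc.symm)
          (by rw [hj2]; exact fun hc => h1 (add_right_cancel hc))
      rw [e3, e1, e2]
    · by_cases hi : (x : ZMod n) = i
      · have cx1 : ((x + 1 : ℤ) : ZMod n) = i + 1 := by rw [intCast_add_one, hi]
        have e1 : sigFun n j x = x :=
          sigFun_eq3 (by rw [hi]; exact fun hc => h1 hc.symm) (by rw [hi]; exact h3)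
        have e2 : sigFun n i x = x + 1 := sigFun_eq1 hi
        have e3 : sigFun n j (x + 1) = x + 1 :=
          sigFun_eq3 (by rw [cx1]; exact fun hc => h2 hc.symm)
            (by rw [cx1]; exact fun hc => h1 (add_right_cancel hc).symm)
        rw [e1, e2, e3]
      · by_cases hi2 : (x : ZMod n) = i + 1
        · have cx : ((x - 1 : ℤ) : ZMod n) = i := by rw [intCast_sub_one, hi2]; ring
          have e1 : sigFun n j x = x :=
            sigFun_eq3 (by rw [hi2]; exact fun hc => h2 hc.symm)
              (by rw [hi2]; exact fun hc => h1 (add_right_cancel hc).symm)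
          have e2 : sigFun n i x = x - 1 := sigFun_eq2 hn hi2
          have e3 : sigFun n j (x - 1) = x - 1 :=
            sigFun_eq3 (by rw [cx]; exact fun hc => h1 hc.symm) (by rw [cx]; exact h3)
          rw [e1, e2, e3]
        · have e1 : sigFun n j x = x := sigFun_eq3 hj hj2
          have e2 : sigFun n i x = x := sigFun_eq3 hi hi2
          rw [e1, e2, e1]

end Perm

section Perm2

variable {n : ℕ}

lemma affineA_M (i j : ZMod n) : (affineA n).M i j =
    (if i = j then 1 else if j = i + 1 ∨ i = j + 1 then (if n = 2 then 0 else 3) else 2) := rfl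

lemma sig_braid (hn : 2 ≤ n) (hn3 : 3 ≤ n) (i : ZMod n) :
    (sigPerm hn i * sigPerm hn (i + 1)) ^ 3 = 1 := by
  have hd1 : ∀ a : ZMod n, a + 1 ≠ a := add_one_ne_self hn
  have hd2 : i + 1 + 1 ≠ i := fun hc => two_ne_zero_zmod hn3 (by linear_combination hc)
  ext x
  rw [pow_succ, pow_succ, pow_succ, pow_zero, one_mul]
  simp only [Equiv.Perm.mul_apply, sigPerm_apply, Equiv.Perm.one_apply]
  by_cases hx : (x : ZMod n) = i
  · have e1 : sigFun n (i+1) x = x :=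
      sigFun_eq3 (by rw [hx]; exact fun hc => hd1 i hc.symm)
        (by rw [hx]; exact fun hc => hd2 hc.symm)
    have e2 : sigFun n i x = x + 1 := sigFun_eq1 hx
    have c1 : ((x + 1 : ℤ) : ZMod n) = i + 1 := by rw [intCast_add_one, hx]
    have e3 : sigFun n (i+1) (x+1) = x + 1 + 1 := sigFun_eq1 c1
    have c2 : ((x + 1 + 1 : ℤ) : ZMod n) = i + 1 + 1 := by rw [intCast_add_one, c1]
    have e4 : sigFun n i (x+1+1) = x+1+1 :=
      sigFun_eq3 (by rw [c2]; exact hd2) (by rw [c2]; exact fun hc => hd1 (i+1) hc)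
    have e5 : sigFun n (i+1) (x+1+1) = x+1+1-1 := sigFun_eq2 hn c2
    have c3 : ((x + 1 + 1 - 1 : ℤ) : ZMod n) = i + 1 := by rw [intCast_sub_one, c2]; ring
    have e6 : sigFun n i (x+1+1-1) = x+1+1-1-1 := sigFun_eq2 hn c3
    rw [e1, e2, e3, e4, e5, e6]
    omega
  · by_cases hx1 : (x : ZMod n) = i + 1
    · have e1 : sigFun n (i+1) x = x + 1 := sigFun_eq1 hx1
      have c1 : ((x + 1 : ℤ) : ZMod n) = i + 1 + 1 := by rw [intCast_add_one, hx1]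
      have e2 : sigFun n i (x+1) = x+1 :=
        sigFun_eq3 (by rw [c1]; exact hd2) (by rw [c1]; exact fun hc => hd1 (i+1) hc)
      have e3 : sigFun n (i+1) (x+1) = x+1-1 := sigFun_eq2 hn c1
      have c2 : ((x + 1 - 1 : ℤ) : ZMod n) = i + 1 := by rw [intCast_sub_one, c1]; ring
      have e4 : sigFun n i (x+1-1) = x+1-1-1 := sigFun_eq2 hn c2
      have c3 : ((x + 1 - 1 - 1 : ℤ) : ZMod n) = i := by rw [intCast_sub_one, c2]; ring
      have e5 : sigFun n (i+1) (x+1-1-1) = x+1-1-1 :=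
        sigFun_eq3 (by rw [c3]; exact fun hc => hd1 i hc.symm)
          (by rw [c3]; exact fun hc => hd2 hc.symm)
      have e6 : sigFun n i (x+1-1-1) = x+1-1-1+1 := sigFun_eq1 c3
      rw [e1, e2, e3, e4, e5, e6]
      omega
    · by_cases hx2 : (x : ZMod n) = i + 1 + 1
      · have e1 : sigFun n (i+1) x = x - 1 := sigFun_eq2 hn hx2
        have c1 : ((x - 1 : ℤ) : ZMod n) = i + 1 := by rw [intCast_sub_one, hx2]; ring
        have e2 : sigFun n i (x-1) = x-1-1 := sigFun_eq2 hn c1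
        have c2 : ((x - 1 - 1 : ℤ) : ZMod n) = i := by rw [intCast_sub_one, c1]; ring
        have e3 : sigFun n (i+1) (x-1-1) = x-1-1 :=
          sigFun_eq3 (by rw [c2]; exact fun hc => hd1 i hc.symm)
            (by rw [c2]; exact fun hc => hd2 hc.symm)
        have e4 : sigFun n i (x-1-1) = x-1-1+1 := sigFun_eq1 c2
        have c3 : ((x - 1 - 1 + 1 : ℤ) : ZMod n) = i + 1 := by rw [intCast_add_one, c2]
        have e5 : sigFun n (i+1) (x-1-1+1) = x-1-1+1+1 := sigFun_eq1 c3
        have c4 : ((x - 1 - 1 + 1 + 1 : ℤ) : ZMod n) = i + 1 + 1 := by rw [intCast_add_one, c3]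
        have e6 : sigFun n i (x-1-1+1+1) = x-1-1+1+1 :=
          sigFun_eq3 (by rw [c4]; exact hd2) (by rw [c4]; exact fun hc => hd1 (i+1) hc)
        rw [e1, e2, e3, e4, e5, e6]
        omega
      · have e1 : sigFun n (i+1) x = x := sigFun_eq3 hx1 hx2
        have e2 : sigFun n i x = x := sigFun_eq3 hx hx1
        rw [e1, e2, e1, e2, e1, e2]

lemma affineA_isLiftable (hn : 2 ≤ n) :
    (affineA n).IsLiftable (fun i => sigPerm (n := n) hn i) := by
  intro i j
  show (sigPerm hn i * sigPerm hn j) ^ ((affineA n).M i j) = 1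
  rw [affineA_M]
  by_cases hij : i = j
  · subst hij
    rw [if_pos rfl, pow_one, sigPerm_mul_self]
  · rw [if_neg hij]
    by_cases hadj : j = i + 1 ∨ i = j + 1
    · rw [if_pos hadj]
      by_cases h2 : n = 2
      · rw [if_pos h2, pow_zero]
      · rw [if_neg h2]
        have hn3 : 3 ≤ n := by omega
        rcases hadj with rfl | rfl
        · exact sig_braid hn hn3 i
        · have key := sig_braid hn hn3 j
          have hswap : sigPerm hn (j + 1) * sigPerm hn j =
              (sigPerm hn j * sigPerm hn (j + 1))⁻¹ := by
            rw [mul_inv_rev, sigPerm_inv, sigPerm_inv]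
          rw [hswap, inv_pow, key, inv_one]
    · rw [if_neg hadj]
      push_neg at hadj
      have hc := sig_comm hn (fun hc => hij hc.symm) hadj.1 hadj.2
      rw [pow_two, show sigPerm hn i * sigPerm hn j * (sigPerm hn i * sigPerm hn j)
          = sigPerm hn i * (sigPerm hn j * sigPerm hn i) * sigPerm hn j by group, ← hc,
        show sigPerm hn i * (sigPerm hn i * sigPerm hn j) * sigPerm hn j
          = (sigPerm hn i * sigPerm hn i) * (sigPerm hn j * sigPerm hn j) by group,
        sigPerm_mul_self, sigPerm_mul_self, one_mul]

end Perm2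

section Perm3

variable {n : ℕ} {W : Type*} [Group W]

/-- The representation of the affine Coxeter group on `ℤ`. -/
def phiHom (hn : 2 ≤ n) (cs : CoxeterSystem (affineA n) W) : W →* Equiv.Perm ℤ :=
  cs.lift ⟨fun i => sigPerm hn i, affineA_isLiftable hn⟩

lemma phiHom_simple (hn : 2 ≤ n) (cs : CoxeterSystem (affineA n) W) (i : ZMod n) :
    phiHom hn cs (cs.simple i) = sigPerm hn i :=
  cs.lift_apply_simple (affineA_isLiftable hn) i

/-- Periodicity of a permutation of `ℤ`. -/
def PerN (n : ℕ) (f : Equiv.Perm ℤ) : Prop := ∀ x : ℤ, f (x + n) = f x + n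

lemma perN_one : PerN n 1 := fun x => rfl

lemma perN_mul {f g : Equiv.Perm ℤ} (hf : PerN n f) (hg : PerN n g) : PerN n (f * g) := by
  intro x
  simp only [Equiv.Perm.mul_apply]
  rw [hg x, hf (g x)]

lemma perN_sig (hn : 2 ≤ n) (i : ZMod n) : PerN n (sigPerm hn i) := by
  intro x
  have hcl : ((x + (n : ℤ) : ℤ) : ZMod n) = (x : ZMod n) := by push_cast; simp
  simp only [sigPerm_apply]
  by_cases h1 : (x : ZMod n) = i
  · rw [sigFun_eq1 (by rw [hcl]; exact h1), sigFun_eq1 h1]; ring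
  · by_cases h2 : (x : ZMod n) = i + 1
    · rw [sigFun_eq2 hn (by rw [hcl]; exact h2), sigFun_eq2 hn h2]; ring
    · rw [sigFun_eq3 (by rw [hcl]; exact h1) (by rw [hcl]; exact h2), sigFun_eq3 h1 h2]

lemma perN_phi (hn : 2 ≤ n) (cs : CoxeterSystem (affineA n) W) (w : W) :
    PerN n (phiHom hn cs w) := by
  induction w using cs.simple_induction with
  | simple i => rw [phiHom_simple]; exact perN_sig hn i
  | one => rw [map_one]; exact perN_one
  | mul w1 w2 h1 h2 => rw [map_mul]; exact perN_mul h1 h2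

lemma perN_inv {f : Equiv.Perm ℤ} (hf : PerN n f) : PerN n f⁻¹ := by
  intro x
  have := hf (f⁻¹ x)
  rw [show f (f⁻¹ x) = x from Equiv.apply_symm_apply f x] at this
  rw [← this]; exact Equiv.symm_apply_apply f _

lemma perN_nsmul {f : Equiv.Perm ℤ} (hf : PerN n f) (k : ℕ) (x : ℤ) :
    f (x + k * n) = f x + k * n := by
  induction k with
  | zero => simp
  | succ m ih =>
    have e : x + ((m + 1 : ℕ) : ℤ) * n = (x + (m : ℤ) * n) + n := by push_cast; ring
    rw [e, hf, ih]
    push_cast; ring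

lemma perN_zsmul {f : Equiv.Perm ℤ} (hf : PerN n f) (q : ℤ) (x : ℤ) :
    f (x + q * n) = f x + q * n := by
  rcases le_or_gt 0 q with h | h
  · have e : q = ((q.toNat : ℕ) : ℤ) := by omega
    rw [e]
    exact perN_nsmul hf q.toNat x
  · have e : ((((-q).toNat : ℕ)) : ℤ) = -q := by omega
    have h2 := perN_nsmul hf (-q).toNat (x + q * n)
    rw [e] at h2
    have e2 : x + q * n + -q * n = x := by ring
    rw [e2] at h2
    linarith

/-- Inversions of a periodic permutation, normalized to first coordinate in `[0, n)`. -/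
def invSet (n : ℕ) (f : Equiv.Perm ℤ) : Set (ℤ × ℤ) :=
  {p | 0 ≤ p.1 ∧ p.1 < n ∧ p.1 < p.2 ∧ f p.2 < f p.1}

noncomputable def invN (n : ℕ) (f : Equiv.Perm ℤ) : ℕ := (invSet n f).ncard

lemma abs_bound (f : Equiv.Perm ℤ) : ∀ r : ℤ, 0 ≤ r → r < n →
    |f r| ≤ ((((Finset.range n).sup fun k => (f (k : ℤ)).natAbs) : ℕ) : ℤ) := by
  intro r h0 hr
  have e : r = ((r.toNat : ℕ) : ℤ) := by omega
  rw [e, Int.abs_eq_natAbs]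
  have := Finset.le_sup (f := fun k : ℕ => (f (k : ℤ)).natAbs)
    (Finset.mem_range.mpr (show r.toNat < n by omega))
  exact_mod_cast this

lemma invSet_finite {f : Equiv.Perm ℤ} (hn : 2 ≤ n) (hf : PerN n f) : (invSet n f).Finite := by
  set C : ℤ := ((((Finset.range n).sup fun k => (f (k : ℤ)).natAbs) : ℕ) : ℤ) with hC
  refine Set.Finite.subset (Set.Finite.prod (Set.finite_Icc (0 : ℤ) (n - 1))
    (Set.finite_Icc (0 : ℤ) (2 * C + n))) ?_
  rintro ⟨p1, p2⟩ ⟨h0, h1, h2, h3⟩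
  have hn0 : (0 : ℤ) < n := by exact_mod_cast Nat.lt_of_lt_of_le Nat.zero_lt_two hn
  constructor
  · simp only [Set.mem_Icc]; omega
  · simp only [Set.mem_Icc]
    constructor
    · omega
    · -- p2 = n * (p2 / n) + p2 % n
      set q := p2 / (n : ℤ) with hq
      set r := p2 % (n : ℤ) with hr
      have hdecomp : q * (n : ℤ) + r = p2 := by
        have := Int.mul_ediv_add_emod p2 (n : ℤ)
        rw [mul_comm] at this
        exact this
      have hr0 : 0 ≤ r := Int.emod_nonneg p2 (by omega)
      have hrn : r < n := Int.emod_lt_of_pos p2 hn0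
      have hfp2 : f p2 = f r + q * n := by
        have e : p2 = r + q * n := by linarith
        rw [e, perN_zsmul hf]
      have hb1 := abs_le.mp (abs_bound f p1 h0 h1)
      have hb2 := abs_le.mp (abs_bound f r hr0 hrn)
      have hq : q * n ≤ 2 * C := by
        have : f r + q * n < f p1 := by rw [← hfp2]; exact h3
        linarith
      linarith

lemma invN_one : invN n 1 = 0 := by
  unfold invN
  convert Set.ncard_empty (ℤ × ℤ)
  rw [Set.eq_empty_iff_forall_notMem]
  rintro ⟨p1, p2⟩ ⟨h0, h1, h2, h3⟩
  simp only [Equiv.Perm.one_apply] at h3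
  omega

/-- The main order-comparison lemma for `sigFun`. -/
lemma sigFun_lt (hn : 2 ≤ n) {i : ZMod n} {u v : ℤ} (huv : u < v)
    (hx : ¬(v = u + 1 ∧ (u : ZMod n) = i)) : sigFun n i u < sigFun n i v := by
  by_cases hu1 : (u : ZMod n) = i
  · have hvne : v ≠ u + 1 := fun hc => hx ⟨hc, hu1⟩
    rw [sigFun_eq1 hu1]
    by_cases hv1 : (v : ZMod n) = i
    · rw [sigFun_eq1 hv1]; omega
    · by_cases hv2 : (v : ZMod n) = i + 1
      · rw [sigFun_eq2 hn hv2]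
        -- need v ≠ u + 2
        have : v ≠ u + 2 := by
          intro hc
          rw [hc] at hv2
          have : ((u + 2 : ℤ) : ZMod n) = (u : ZMod n) + 1 + 1 := by push_cast; ring
          rw [this, hu1] at hv2
          exact add_one_ne_self hn (i + 1) (by linear_combination hv2)
        omega
      · rw [sigFun_eq3 hv1 hv2]; omega
  · by_cases hu2 : (u : ZMod n) = i + 1
    · rw [sigFun_eq2 hn hu2]
      by_cases hv1 : (v : ZMod n) = i
      · rw [sigFun_eq1 hv1]; omega
      · by_cases hv2 : (v : ZMod n) = i + 1
        · rw [sigFun_eq2 hn hv2]; omega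
        · rw [sigFun_eq3 hv1 hv2]; omega
    · rw [sigFun_eq3 hu1 hu2]
      by_cases hv1 : (v : ZMod n) = i
      · rw [sigFun_eq1 hv1]; omega
      · by_cases hv2 : (v : ZMod n) = i + 1
        · rw [sigFun_eq2 hn hv2]
          have : v ≠ u + 1 := by
            intro hc
            rw [hc] at hv2
            have : ((u + 1 : ℤ) : ZMod n) = (u : ZMod n) + 1 := by push_cast; ring
            rw [this] at hv2
            exact hu1 (by linear_combination hv2)
          omega
        · rw [sigFun_eq3 hv1 hv2]; omega

end Perm3

section Perm4

variable {n : ℕ}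

lemma qzero {a q : ℤ} (hn0 : 0 < (n : ℤ)) (h1 : 0 ≤ a) (h2 : a < n) (h3 : 0 ≤ a + q * n)
    (h4 : a + q * n < n) : q = 0 := by
  rcases lt_trichotomy q 0 with h | h | h
  · nlinarith
  · exact h
  · nlinarith

lemma perShift {f : Equiv.Perm ℤ} (hn : 2 ≤ n) (hf : PerN n f) (p c : ℤ)
    (h : ((f p : ℤ) : ZMod n) = ((f c : ℤ) : ZMod n)) :
    ∃ q : ℤ, p = c + q * n ∧ f p = f c + q * n := by
  haveI : NeZero n := ⟨by omega⟩
  rw [ZMod.intCast_eq_intCast_iff] at h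
  obtain ⟨q, hq⟩ : ((n : ℤ)) ∣ (f p - f c) := Int.ModEq.dvd h.symm
  rw [mul_comm] at hq
  refine ⟨q, ?_, by omega⟩
  have h2 : f p = f (c + q * n) := by rw [perN_zsmul hf]; omega
  have := f.injective h2
  omega

/-- Multiplying by `sigPerm i` on the left adds the ascending special pair `(a,b)`. -/
lemma invSet_asc (hn : 2 ≤ n) {f : Equiv.Perm ℤ} (hf : PerN n f) {i : ZMod n} {a b : ℤ}
    (h0 : 0 ≤ a) (h1 : a < n) (h2 : a < b) (h3 : ((f a : ℤ) : ZMod n) = i)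
    (h4 : f b = f a + 1) :
    invSet n (sigPerm hn i * f) = insert (a, b) (invSet n f) ∧ (a, b) ∉ invSet n f := by
  have hn0 : (0 : ℤ) < n := by exact_mod_cast Nat.lt_of_lt_of_le Nat.zero_lt_two hn
  have hfb : ((f b : ℤ) : ZMod n) = i + 1 := by rw [h4, intCast_add_one, h3]
  have hnotin : (a, b) ∉ invSet n f := by
    rintro ⟨-, -, -, hlt⟩
    simp only at hlt
    omega
  refine ⟨?_, hnotin⟩
  ext ⟨p1, p2⟩
  simp only [invSet, Set.mem_setOf_eq, Set.mem_insert_iff, Equiv.Perm.mul_apply, sigPerm_apply,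
    Prod.mk.injEq]
  constructor
  · rintro ⟨c0, c1, c2, c3⟩
    rcases lt_trichotomy (f p1) (f p2) with hlt | heq | hgt
    · by_cases hexc : f p2 = f p1 + 1 ∧ ((f p1 : ℤ) : ZMod n) = i
      · left
        obtain ⟨q, hpq, hfq⟩ := perShift hn hf p1 a (by rw [hexc.2, h3])
        have hq0 : q = 0 := qzero hn0 h0 h1 (by omega) (by omega)
        rw [hq0] at hpq hfq
        simp only [zero_mul, add_zero] at hpq hfq
        have hp2 : p2 = b := by
          have he : f p2 = f b := by omega
          exact f.injective he
        exact ⟨hpq, hp2⟩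
      · exact absurd (sigFun_lt hn hlt hexc) (by omega)
    · exact absurd (f.injective heq) (by omega)
    · exact Or.inr ⟨c0, c1, c2, hgt⟩
  · rintro (⟨rfl, rfl⟩ | ⟨c0, c1, c2, c3⟩)
    · refine ⟨h0, h1, h2, ?_⟩
      rw [sigFun_eq1 h3, h4, sigFun_eq2 hn (show ((f p1 + 1 : ℤ) : ZMod n) = i + 1 by
        rw [← h4]; exact hfb)]
      omega
    · refine ⟨c0, c1, c2, ?_⟩
      have hexc : ¬(f p1 = f p2 + 1 ∧ ((f p2 : ℤ) : ZMod n) = i) := by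
        rintro ⟨he1, he2⟩
        obtain ⟨q, hpq, hfq⟩ := perShift hn hf p2 a (by rw [he2, h3])
        have hfp1 : f p1 = f (b + q * n) := by rw [perN_zsmul hf]; omega
        have := f.injective hfp1
        omega
      exact sigFun_lt hn c3 hexc

/-- Multiplying by `sigPerm i` on the left removes the descending special pair `(a,b)`. -/
lemma invSet_desc (hn : 2 ≤ n) {f : Equiv.Perm ℤ} (hf : PerN n f) {i : ZMod n} {a b : ℤ}
    (h0 : 0 ≤ a) (h1 : a < n) (h2 : a < b) (h3 : ((f b : ℤ) : ZMod n) = i)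
    (h4 : f a = f b + 1) :
    invSet n (sigPerm hn i * f) = invSet n f \ {(a, b)} ∧ (a, b) ∈ invSet n f := by
  have hn0 : (0 : ℤ) < n := by exact_mod_cast Nat.lt_of_lt_of_le Nat.zero_lt_two hn
  have hfa : ((f a : ℤ) : ZMod n) = i + 1 := by rw [h4, intCast_add_one, h3]
  have hmem : (a, b) ∈ invSet n f := ⟨h0, h1, h2, by simp only; omega⟩
  refine ⟨?_, hmem⟩
  ext ⟨p1, p2⟩
  simp only [invSet, Set.mem_setOf_eq, Set.mem_diff, Set.mem_singleton_iff, Equiv.Perm.mul_apply,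
    sigPerm_apply, Prod.mk.injEq]
  constructor
  · rintro ⟨c0, c1, c2, c3⟩
    rcases lt_trichotomy (f p1) (f p2) with hlt | heq | hgt
    · by_cases hexc : f p2 = f p1 + 1 ∧ ((f p1 : ℤ) : ZMod n) = i
      · exfalso
        obtain ⟨q, hpq, hfq⟩ := perShift hn hf p1 b (by rw [hexc.2, h3])
        have hfp2 : f p2 = f (a + q * n) := by rw [perN_zsmul hf]; omega
        have := f.injective hfp2
        omega
      · exact absurd (sigFun_lt hn hlt hexc) (by omega)
    · exact absurd (f.injective heq) (by omega)
    · refine ⟨⟨c0, c1, c2, hgt⟩, ?_⟩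
      rintro ⟨rfl, rfl⟩
      have hfa' : ((f p2 + 1 : ℤ) : ZMod n) = i + 1 := by rw [← h4]; exact hfa
      rw [h4, sigFun_eq2 hn hfa', sigFun_eq1 h3] at c3
      omega
  · rintro ⟨⟨c0, c1, c2, c3⟩, hne⟩
    refine ⟨c0, c1, c2, ?_⟩
    have hexc : ¬(f p1 = f p2 + 1 ∧ ((f p2 : ℤ) : ZMod n) = i) := by
      rintro ⟨he1, he2⟩
      obtain ⟨q, hpq, hfq⟩ := perShift hn hf p2 b (by rw [he2, h3])
      have hfp1 : f p1 = f (a + q * n) := by rw [perN_zsmul hf]; omega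
      have hp1 := f.injective hfp1
      have hq0 : q = 0 := qzero hn0 h0 h1 (by omega) (by omega)
      rw [hq0] at hp1 hpq
      simp only [zero_mul, add_zero] at hp1 hpq
      exact hne ⟨hp1, hpq⟩
    exact sigFun_lt hn c3 hexc

lemma asc_or_desc (hn : 2 ≤ n) {f : Equiv.Perm ℤ} (hf : PerN n f) (i : ZMod n) :
    (∃ a b : ℤ, 0 ≤ a ∧ a < n ∧ a < b ∧ ((f a : ℤ) : ZMod n) = i ∧ f b = f a + 1) ∨
    (∃ a b : ℤ, 0 ≤ a ∧ a < n ∧ a < b ∧ ((f b : ℤ) : ZMod n) = i ∧ f a = f b + 1) := by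
  haveI : NeZero n := ⟨by omega⟩
  have hn0 : (0 : ℤ) < n := by exact_mod_cast Nat.lt_of_lt_of_le Nat.zero_lt_two hn
  set r₀ : ℤ := (i.val : ℤ) with hr₀
  have hcl : ((r₀ : ℤ) : ZMod n) = i := by
    rw [hr₀]
    exact_mod_cast ZMod.natCast_rightInverse i
  set u : ℤ := f⁻¹ r₀ with hu
  set v : ℤ := f⁻¹ (r₀ + 1) with hv
  have hfu : f u = r₀ := Equiv.apply_symm_apply f r₀
  have hfv : f v = r₀ + 1 := Equiv.apply_symm_apply f (r₀ + 1)
  have huv : u ≠ v := by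
    intro hc
    rw [hc, hfv] at hfu
    omega
  rcases lt_or_gt_of_ne huv with h | h
  · left
    set q : ℤ := -(u / n) with hq
    have hqn : q * (n : ℤ) = -((n : ℤ) * (u / (n : ℤ))) := by rw [hq]; ring
    have hmod := Int.emod_nonneg u (show (n:ℤ) ≠ 0 by omega)
    have hmod2 := Int.emod_lt_of_pos u hn0
    rw [Int.emod_def] at hmod hmod2
    refine ⟨u + q * n, v + q * n, by omega, by omega, by omega, ?_, ?_⟩
    · rw [perN_zsmul hf, hfu]
      push_cast
      rw [hcl]
      simp [ZMod.natCast_self]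
    · rw [perN_zsmul hf, perN_zsmul hf, hfu, hfv]
      ring
  · right
    set q : ℤ := -(v / n) with hq
    have hqn : q * (n : ℤ) = -((n : ℤ) * (v / (n : ℤ))) := by rw [hq]; ring
    have hmod := Int.emod_nonneg v (show (n:ℤ) ≠ 0 by omega)
    have hmod2 := Int.emod_lt_of_pos v hn0
    rw [Int.emod_def] at hmod hmod2
    refine ⟨v + q * n, u + q * n, by omega, by omega, by omega, ?_, ?_⟩
    · rw [perN_zsmul hf, hfu]
      push_cast
      rw [hcl]
      simp [ZMod.natCast_self]
    · rw [perN_zsmul hf, perN_zsmul hf, hfu, hfv]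
      ring

lemma invN_asc (hn : 2 ≤ n) {f : Equiv.Perm ℤ} (hf : PerN n f) {i : ZMod n} {a b : ℤ}
    (h0 : 0 ≤ a) (h1 : a < n) (h2 : a < b) (h3 : ((f a : ℤ) : ZMod n) = i)
    (h4 : f b = f a + 1) : invN n (sigPerm hn i * f) = invN n f + 1 := by
  obtain ⟨hset, hnot⟩ := invSet_asc hn hf h0 h1 h2 h3 h4
  unfold invN
  rw [hset]
  exact Set.ncard_insert_of_notMem hnot (invSet_finite hn hf)

lemma invN_step_le (hn : 2 ≤ n) {f : Equiv.Perm ℤ} (hf : PerN n f) (i : ZMod n) :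
    invN n (sigPerm hn i * f) ≤ invN n f + 1 := by
  rcases asc_or_desc hn hf i with ⟨a, b, h0, h1, h2, h3, h4⟩ | ⟨a, b, h0, h1, h2, h3, h4⟩
  · rw [invN_asc hn hf h0 h1 h2 h3 h4]
  · obtain ⟨hset, -⟩ := invSet_desc hn hf h0 h1 h2 h3 h4
    unfold invN
    rw [hset]
    have := Set.ncard_le_ncard (Set.diff_subset (s := invSet n f) (t := {(a, b)}))
      (invSet_finite hn hf)
    omega

end Perm4

section Words

variable {n : ℕ} {W : Type*} [Group W]

lemma posIn_succ (hn : 2 ≤ n) {b x : ZMod n} (h : x + 1 ≠ b) :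
    posIn n b (x + 1) = posIn n b x + 1 := by
  haveI : NeZero n := ⟨by omega⟩
  haveI : Fact (1 < n) := ⟨by omega⟩
  unfold posIn
  have e : x + 1 - b = (x - b) + 1 := by ring
  rw [e]
  have hne : (x - b) ≠ -1 := by
    intro hc
    exact h (by linear_combination hc)
  have hlt : (x - b).val < n - 1 := by
    have h1 := ZMod.val_lt (x - b)
    rcases Nat.lt_or_ge ((x - b).val) (n - 1) with h' | h'
    · exact h'
    · exfalso
      have hval : (x - b).val = n - 1 := by omega
      apply hne
      have hcast := congrArg (fun t : ℕ => (t : ZMod n)) hval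
      rw [ZMod.natCast_rightInverse (x - b)] at hcast
      rw [hcast]
      have : ((n - 1 : ℕ) : ZMod n) = (n : ZMod n) - 1 := by
        have : (1 : ℕ) ≤ n := by omega
        push_cast [this]
        ring
      rw [this, ZMod.natCast_self]
      ring
  have hv1 : (1 : ZMod n).val = 1 := ZMod.val_one n
  rw [ZMod.val_add_of_lt (by rw [hv1]; omega), hv1]

lemma posIn_lt_ne {b x y : ZMod n} (h : posIn n b x < posIn n b y) : x ≠ y := by
  intro hc; rw [hc] at h; omega

/-- Lemma S: the product of `sigPerm`s over letters of `l` fixes a congruence class that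
is not adjacent to any letter. -/
lemma phi_fix (hn : 2 ≤ n) (cs : CoxeterSystem (affineA n) W) (l : List (ZMod n))
    {z : ZMod n} (h1 : z ∉ l) (h2 : z - 1 ∉ l) {m : ℤ} (hm : (m : ZMod n) = z) :
    phiHom hn cs (cs.wordProd l) m = m := by
  induction l with
  | nil => rw [CoxeterSystem.wordProd_nil, map_one]; rfl
  | cons x t ih =>
    rw [cs.wordProd_cons, map_mul, phiHom_simple, Equiv.Perm.mul_apply,
      ih (fun hc => h1 (List.mem_cons_of_mem x hc)) (fun hc => h2 (List.mem_cons_of_mem x hc)),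
      sigPerm_apply, sigFun_eq3]
    · rw [hm]; exact fun hc => h1 (hc ▸ List.mem_cons_self (a := x) (l := t))
    · rw [hm]
      intro hc
      exact h2 (by rw [show z - 1 = x from by rw [hc]; ring]; exact List.mem_cons_self (a := x) (l := t))

/-- Lemma T: applying the product over an increasing list to a class above all letters
moves points downward, into letter classes. -/
lemma phi_desc_le (hn : 2 ≤ n) (cs : CoxeterSystem (affineA n) W) {b : ZMod n} :
    ∀ c : List (ZMod n), c.Pairwise (fun a a' => posIn n b a < posIn n b a') →
    ∀ m : ℤ, (∀ x ∈ c, posIn n b x < posIn n b ((m : ZMod n))) →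
    phiHom hn cs (cs.wordProd c) m ≤ m ∧
      ((((phiHom hn cs (cs.wordProd c) m : ℤ) : ZMod n)) = (m : ZMod n) ∨
        (((phiHom hn cs (cs.wordProd c) m : ℤ) : ZMod n)) ∈ c) := by
  intro c
  induction c with
  | nil =>
    intro _ m _
    rw [CoxeterSystem.wordProd_nil, map_one]
    exact ⟨le_refl m, Or.inl rfl⟩
  | cons x₁ t ih =>
    intro hpw m hy
    obtain ⟨hhead, htail⟩ := List.pairwise_cons.mp hpw
    obtain ⟨ih1, ih2⟩ := ih htail m (fun x hx => hy x (List.mem_cons_of_mem x₁ hx))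
    set m' := phiHom hn cs (cs.wordProd t) m with hm'
    have hposy : posIn n b x₁ < posIn n b (((m' : ℤ) : ZMod n)) := by
      rcases ih2 with he | he
      · rw [he]; exact hy x₁ (List.mem_cons_self (a := x₁) (l := t))
      · exact hhead _ he
    have hne1 : ((m' : ℤ) : ZMod n) ≠ x₁ := fun hc => (posIn_lt_ne hposy) hc.symm
    rw [cs.wordProd_cons, map_mul, phiHom_simple, Equiv.Perm.mul_apply, ← hm', sigPerm_apply]
    by_cases hc2 : ((m' : ℤ) : ZMod n) = x₁ + 1
    · rw [sigFun_eq2 hn hc2]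
      refine ⟨by omega, Or.inr ?_⟩
      rw [intCast_sub_one, hc2]
      simp only [add_sub_cancel_right]
      exact List.mem_cons_self (a := x₁) (l := t)
    · rw [sigFun_eq3 hne1 hc2]
      refine ⟨ih1, ?_⟩
      rcases ih2 with he | he
      · exact Or.inl he
      · exact Or.inr (List.mem_cons_of_mem x₁ he)

/-- Lemma G: computation of the inverse product on each congruence class. -/
lemma g_compute (hn : 2 ≤ n) (cs : CoxeterSystem (affineA n) W) {b : ZMod n} :
    ∀ c : List (ZMod n), c.Pairwise (fun a a' => posIn n b a < posIn n b a') → b ∉ c →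
    ∀ m : ℤ,
      (((m : ZMod n)) ∈ c → phiHom hn cs (cs.wordProd c) m = m + 1) ∧
      (((m : ZMod n)) ∉ c → ((m : ZMod n)) - 1 ∈ c → phiHom hn cs (cs.wordProd c) m < m) := by
  intro c
  induction c using List.reverseRecOn with
  | nil =>
    intro _ _ m
    constructor
    · intro h; exact absurd h (List.not_mem_nil)
    · intro _ h; exact absurd h (List.not_mem_nil)
  | append_singleton c' x ihc =>
    intro hpw hbc m
    have hpw' : c'.Pairwise (fun a a' => posIn n b a < posIn n b a') :=
      (List.pairwise_append.mp hpw).1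
    have hbx : ∀ a ∈ c', posIn n b a < posIn n b x := by
      intro a ha
      exact (List.pairwise_append.mp hpw).2.2 a ha x (List.mem_singleton_self x)
    have hbc' : b ∉ c' := fun hc => hbc (List.mem_append.mpr (Or.inl hc))
    have hxb : x ≠ b := fun hc => hbc (List.mem_append.mpr (Or.inr (by rw [hc]; simp)))
    have hxc' : x ∉ c' := fun hc => by have := hbx x hc; omega
    have hx1c' : x + 1 ∉ c' := by
      intro hc
      by_cases hxb1 : x + 1 = b
      · exact hbc' (hxb1 ▸ hc)
      · have := hbx (x + 1) hc
        rw [posIn_succ hn hxb1] at this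
        omega
    have hprod : cs.wordProd (c' ++ [x]) = cs.wordProd c' * cs.simple x := by
      rw [cs.wordProd_append, cs.wordProd_singleton]
    constructor
    · -- m's class is a letter, the result is m + 1
      intro hmem
      rw [hprod, map_mul, phiHom_simple, Equiv.Perm.mul_apply, sigPerm_apply]
      rcases List.mem_append.mp hmem with hmem' | hmem'
      · -- class in c' : sigPerm x fixes m
        have hne1 : (m : ZMod n) ≠ x := fun hc => hxc' (hc ▸ hmem')
        have hne2 : (m : ZMod n) ≠ x + 1 := fun hc => hx1c' (hc ▸ hmem')
        rw [sigFun_eq3 hne1 hne2]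
        exact (ihc hpw' hbc' m).1 hmem'
      · -- class is x
        have hmx : (m : ZMod n) = x := List.mem_singleton.mp hmem'
        rw [sigFun_eq1 hmx]
        exact phi_fix hn cs c' hx1c'
          (by rw [show x + 1 - 1 = x from by ring]; exact hxc')
          (by rw [intCast_add_one, hmx])
    · -- m's class is just above a letter: result < m
      intro hnmem hmem1
      rw [hprod, map_mul, phiHom_simple, Equiv.Perm.mul_apply, sigPerm_apply]
      have hnex : (m : ZMod n) ≠ x := fun hc => hnmem (by rw [hc]; simp)
      rcases List.mem_append.mp hmem1 with hmem' | hmem'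
      · -- y - 1 ∈ c', y - 1 ≠ x, so sigPerm x fixes m
        have hne2 : (m : ZMod n) ≠ x + 1 := by
          intro hc
          have : (m : ZMod n) - 1 = x := by rw [hc]; ring
          exact hxc' (this ▸ hmem')
        rw [sigFun_eq3 hnex hne2]
        exact (ihc hpw' hbc' m).2 (fun hc => hnmem (List.mem_append.mpr (Or.inl hc))) hmem'
      · -- y = x + 1
        have hmx1 : (m : ZMod n) = x + 1 := by
          have : (m : ZMod n) - 1 = x := List.mem_singleton.mp hmem'
          linear_combination this
        rw [sigFun_eq2 hn hmx1]
        have hclm1 : ((m - 1 : ℤ) : ZMod n) = x := by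
          rw [intCast_sub_one, hmx1]; ring
        by_cases hxm1 : x - 1 ∈ c'
        · have := (ihc hpw' hbc' (m - 1)).2 (by rw [hclm1]; exact hxc')
            (by rw [hclm1]; exact hxm1)
          omega
        · have := phi_fix hn cs c' hxc' hxm1 hclm1
          omega

end Words

section Words2

variable {n : ℕ} {W : Type*} [Group W]

lemma invN_wordProd_le (hn : 2 ≤ n) (cs : CoxeterSystem (affineA n) W) :
    ∀ l : List (ZMod n), invN n (phiHom hn cs (cs.wordProd l)) ≤ l.length := by
  intro l
  induction l with
  | nil => rw [CoxeterSystem.wordProd_nil, map_one, invN_one]; exact Nat.zero_le 0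
  | cons x t ih =>
    rw [cs.wordProd_cons, map_mul, phiHom_simple]
    calc invN n (sigPerm hn x * phiHom hn cs (cs.wordProd t))
        ≤ invN n (phiHom hn cs (cs.wordProd t)) + 1 :=
          invN_step_le hn (perN_phi hn cs _) x
      _ ≤ t.length + 1 := by omega

lemma invN_le_length (hn : 2 ≤ n) (cs : CoxeterSystem (affineA n) W) (w : W) :
    invN n (phiHom hn cs w) ≤ cs.length w := by
  obtain ⟨ω, hlen, rfl⟩ := cs.exists_reduced_word w
  calc invN n (phiHom hn cs (cs.wordProd ω)) ≤ ω.length := invN_wordProd_le hn cs ω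
    _ = _ := hlen.symm

/-- The inversion number of the product over the reversed increasing list equals its length. -/
lemma invN_revProd (hn : 2 ≤ n) (cs : CoxeterSystem (affineA n) W) {b : ZMod n} :
    ∀ c : List (ZMod n), c.Pairwise (fun a a' => posIn n b a < posIn n b a') → b ∉ c →
    invN n (phiHom hn cs (cs.wordProd c.reverse)) = c.length := by
  haveI : NeZero n := ⟨by omega⟩
  have hn0 : (0 : ℤ) < n := by exact_mod_cast Nat.lt_of_lt_of_le Nat.zero_lt_two hn
  intro c
  induction c using List.reverseRecOn with
  | nil =>
    intro _ _
    rw [List.reverse_nil, CoxeterSystem.wordProd_nil, map_one, invN_one, List.length_nil]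
  | append_singleton c' x ihc =>
    intro hpw hbc
    have hpw' : c'.Pairwise (fun a a' => posIn n b a < posIn n b a') :=
      (List.pairwise_append.mp hpw).1
    have hbx : ∀ a ∈ c', posIn n b a < posIn n b x := by
      intro a ha
      exact (List.pairwise_append.mp hpw).2.2 a ha x (List.mem_singleton_self x)
    have hbc' : b ∉ c' := fun hc => hbc (List.mem_append.mpr (Or.inl hc))
    have hxb : x ≠ b := fun hc => hbc (List.mem_append.mpr (Or.inr (by rw [hc]; simp)))
    have hxc' : x ∉ c' := fun hc => by have := hbx x hc; omega
    have hx1c' : x + 1 ∉ c' := by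
      intro hc
      by_cases hxb1 : x + 1 = b
      · exact hbc' (hxb1 ▸ hc)
      · have := hbx (x + 1) hc
        rw [posIn_succ hn hxb1] at this
        omega
    have hrev : (c' ++ [x]).reverse = x :: c'.reverse := by simp
    rw [hrev, cs.wordProd_cons, map_mul, phiHom_simple]
    set f' := phiHom hn cs (cs.wordProd c'.reverse) with hf'def
    have hperf' : PerN n f' := perN_phi hn cs _
    set g' := phiHom hn cs (cs.wordProd c') with hg'def
    have hperg' : PerN n g' := perN_phi hn cs _
    have hfg : f'⁻¹ = g' := by
      rw [hf'def, hg'def, CoxeterSystem.wordProd_reverse, map_inv, inv_inv]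
    -- construct the ascending special pair
    set r₀ : ℤ := (x.val : ℤ) with hr₀
    have hclr₀ : ((r₀ : ℤ) : ZMod n) = x := by
      rw [hr₀]; exact_mod_cast ZMod.natCast_rightInverse x
    set A₀ : ℤ := g' r₀ with hA₀
    set q : ℤ := -(A₀ / n) with hq
    have hqn : q * (n : ℤ) = -((n : ℤ) * (A₀ / (n : ℤ))) := by rw [hq]; ring
    have hmod := Int.emod_nonneg A₀ (show (n:ℤ) ≠ 0 by omega)
    have hmod2 := Int.emod_lt_of_pos A₀ hn0
    rw [Int.emod_def] at hmod hmod2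
    set r : ℤ := r₀ + q * n with hr
    set a : ℤ := A₀ + q * n with ha
    have hclr : ((r : ℤ) : ZMod n) = x := by
      rw [hr]
      push_cast
      rw [hclr₀]
      simp [ZMod.natCast_self]
    have hg'r : g' r = a := by rw [hr, perN_zsmul hperg', ← hA₀, ha]
    have hf'a : f' a = r := by
      rw [← hg'r, ← hfg]
      exact Equiv.apply_symm_apply f' r
    -- a ≤ r by Lemma T
    have haler : a ≤ r := by
      have := (phi_desc_le hn cs c' hpw' r (by
        intro y hy
        rw [hclr]
        exact hbx y hy)).1
      rw [← hg'def] at this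
      omega
    -- f' fixes the class of x + 1 ∋ r + 1
    have hclr1 : ((r + 1 : ℤ) : ZMod n) = x + 1 := by rw [intCast_add_one, hclr]
    have hf'r1 : f' (r + 1) = r + 1 := by
      rw [hf'def]
      refine phi_fix hn cs c'.reverse ?_ ?_ hclr1
      · rw [List.mem_reverse]; exact hx1c'
      · rw [List.mem_reverse, show x + 1 - 1 = x from by ring]; exact hxc'
    have hstep := invN_asc hn hperf' (i := x) (a := a) (b := r + 1)
      (by omega) (by omega) (by omega) (by rw [hf'a]; exact hclr) (by rw [hf'r1, hf'a])
    rw [hstep, ihc hpw' hbc']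
    simp

/-- (K5): the length of `h_X` is `|X|`. -/
lemma hword_length (hn : 2 ≤ n) (cs : CoxeterSystem (affineA n) W) {X : Finset (ZMod n)}
    (hXp : ∃ w : ZMod n, w ∉ X) {b : ZMod n} (hb : b ∉ X) :
    cs.length (cs.wordProd (hWord n X b)) = X.card := by
  haveI : NeZero n := ⟨by omega⟩
  have hlen : (hWord n X b).length = X.card := good_length (good_hWord hXp hb)
  have hle : cs.length (cs.wordProd (hWord n X b)) ≤ X.card := by
    have := cs.length_wordProd_le (hWord n X b)
    omega
  have hge : X.card ≤ cs.length (cs.wordProd (hWord n X b)) := by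
    have h1 := invN_revProd hn cs (incList n X b) pairwise_incList
      (fun hc => hb (mem_incList.mp hc))
    rw [← hWord_eq_reverse] at h1
    have h2 := invN_le_length hn cs (cs.wordProd (hWord n X b))
    have h3 : (incList n X b).length = X.card := by
      have : (hWord n X b).length = (incList n X b).length := by
        rw [hWord_eq_reverse, List.length_reverse]
      omega
    omega
  omega

lemma hword_reduced (hn : 2 ≤ n) (cs : CoxeterSystem (affineA n) W) {X : Finset (ZMod n)}
    (hXp : ∃ w : ZMod n, w ∉ X) {b : ZMod n} (hb : b ∉ X) :
    cs.IsReduced (hWord n X b) := by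
  haveI : NeZero n := ⟨by omega⟩
  show cs.length (cs.wordProd (hWord n X b)) = (hWord n X b).length
  rw [hword_length hn cs hXp hb, good_length (good_hWord hXp hb)]

/-- (K3): commutation moves preserve the word product. -/
lemma commMove_wordProd (hn : 2 ≤ n) (cs : CoxeterSystem (affineA n) W)
    {w1 w2 : List (ZMod n)} (h : CommMove n w1 w2) : cs.wordProd w1 = cs.wordProd w2 := by
  obtain ⟨l1, l2, j, k, h1, h2, rfl, rfl⟩ := h
  rw [cs.wordProd_append, cs.wordProd_append, cs.wordProd_cons, cs.wordProd_cons,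
    cs.wordProd_cons, cs.wordProd_cons]
  have hcomm : cs.simple j * cs.simple k = cs.simple k * cs.simple j := by
    by_cases hjk : j = k
    · rw [hjk]
    · have hM : (affineA n).M j k = 2 := by
        rw [affineA_M, if_neg hjk, if_neg]
        rintro (hc | hc)
        · exact h1 hc
        · exact h2 (by rw [hc]; ring)
      have hpow := cs.simple_mul_simple_pow j k
      rw [hM, pow_two] at hpow
      calc cs.simple j * cs.simple k
          = (cs.simple j * cs.simple k)⁻¹ := by
            rw [eq_comm, inv_eq_iff_mul_eq_one]
            exact hpow
        _ = cs.simple k * cs.simple j := by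
            rw [mul_inv_rev, cs.inv_simple, cs.inv_simple]
  rw [show cs.simple j * (cs.simple k * cs.wordProd l2)
      = (cs.simple j * cs.simple k) * cs.wordProd l2 by group, hcomm]
  group

lemma rtg_wordProd (hn : 2 ≤ n) (cs : CoxeterSystem (affineA n) W)
    {w1 w2 : List (ZMod n)} (h : Relation.ReflTransGen (CommMove n) w1 w2) :
    cs.wordProd w1 = cs.wordProd w2 := by
  induction h with
  | refl => rfl
  | tail _ hstep ih => rw [ih, commMove_wordProd hn cs hstep]

/-- Any two good words have equal products. -/
lemma good_wordProd_eq (hn : 2 ≤ n) (cs : CoxeterSystem (affineA n) W) {X : Finset (ZMod n)}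
    (hXp : ∃ w : ZMod n, w ∉ X) {l l' : List (ZMod n)} (hl : GoodW n X l) (hl' : GoodW n X l') :
    cs.wordProd l = cs.wordProd l' := by
  haveI : NeZero n := ⟨by omega⟩
  exact rtg_wordProd hn cs (good_rtg l' X l hXp hl hl')

end Words2

section Crux

variable {n : ℕ} {W : Type*} [Group W]

/-- Crux: if `s_z` is a left descent of `h_X`, then `z ∈ X` and `z + 1 ∉ X`. -/
lemma descent_mem (hn : 2 ≤ n) (cs : CoxeterSystem (affineA n) W) {X : Finset (ZMod n)}
    {b : ZMod n} (hb : b ∉ X) {z : ZMod n}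
    (hz : cs.length (cs.simple z * cs.wordProd (hWord n X b)) <
      cs.length (cs.wordProd (hWord n X b))) :
    z ∈ X ∧ z + 1 ∉ X := by
  haveI : NeZero n := ⟨by omega⟩
  have hn0 : (0 : ℤ) < n := by exact_mod_cast Nat.lt_of_lt_of_le Nat.zero_lt_two hn
  have hXp : ∃ w : ZMod n, w ∉ X := ⟨b, hb⟩
  set H := cs.wordProd (hWord n X b) with hH
  set f := phiHom hn cs H with hfdef
  have hperf : PerN n f := perN_phi hn cs _
  set g := phiHom hn cs (cs.wordProd (incList n X b)) with hgdef
  have hperg : PerN n g := perN_phi hn cs _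
  have hfg : f⁻¹ = g := by
    rw [hfdef, hgdef, hH, hWord_eq_reverse, CoxeterSystem.wordProd_reverse, map_inv, inv_inv]
  have hfgap : ∀ y : ℤ, f (g y) = y := by
    intro y
    rw [← hfg]
    exact Equiv.apply_symm_apply f y
  have hbinc : b ∉ incList n X b := fun hc => hb (mem_incList.mp hc)
  have hinvf : invN n f = X.card := by
    have h1 := invN_revProd hn cs (incList n X b) pairwise_incList hbinc
    rw [← hWord_eq_reverse] at h1
    rw [hfdef, hH, h1]
    have h2 : (hWord n X b).length = X.card := good_length (good_hWord hXp hb)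
    rw [hWord_eq_reverse, List.length_reverse] at h2
    exact h2
  have hlenH : cs.length H = X.card := hword_length hn cs hXp hb
  have hinvle : invN n (sigPerm hn z * f) < X.card := by
    have h1 : invN n (phiHom hn cs (cs.simple z * H)) ≤ cs.length (cs.simple z * H) :=
      invN_le_length hn cs _
    rw [map_mul, phiHom_simple, ← hfdef] at h1
    omega
  by_contra hcon
  have hasc : ∃ a bb : ℤ, 0 ≤ a ∧ a < n ∧ a < bb ∧ ((f a : ℤ) : ZMod n) = z ∧
      f bb = f a + 1 := by
    have hmemg := g_compute hn cs (incList n X b) pairwise_incList hbinc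
    by_cases hzX : z ∈ X
    · -- then z + 1 ∈ X
      have hz1 : z + 1 ∈ X := by
        by_contra hz1
        exact hcon ⟨hzX, hz1⟩
      set u : ℤ := (((z + 1).val : ℤ)) - 1 with hu
      have hclu1 : ((u + 1 : ℤ) : ZMod n) = z + 1 := by
        rw [hu, show (((z + 1).val : ℤ)) - 1 + 1 = ((z+1).val : ℤ) from by ring]
        exact_mod_cast ZMod.natCast_rightInverse (z + 1)
      have hclu : ((u : ℤ) : ZMod n) = z := by
        have h5 := hclu1
        rw [intCast_add_one] at h5
        linear_combination h5
      have hgu : g u = u + 1 := by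
        have := (hmemg u).1 (mem_incList.mpr (hclu ▸ hzX))
        rw [← hgdef] at this
        exact this
      have hgu1 : g (u + 1) = u + 2 := by
        have := (hmemg (u + 1)).1 (mem_incList.mpr (hclu1 ▸ hz1))
        rw [← hgdef] at this
        omega
      have hfa : f (u + 1) = u := by
        have := hfgap u
        rw [hgu] at this
        exact this
      have hfb : f (u + 2) = u + 1 := by
        have := hfgap (u + 1)
        rw [hgu1] at this
        exact this
      refine ⟨u + 1, u + 2, ?_, ?_, by omega, ?_, ?_⟩
      · rw [hu]; omega
      · have := ZMod.val_lt (z + 1); rw [hu]; omega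
      · rw [hfa]; exact hclu
      · rw [hfa, hfb]
    · -- z ∉ X
      set u₀ : ℤ := ((z.val : ℕ) : ℤ) with hu₀
      have hclu₀ : ((u₀ : ℤ) : ZMod n) = z := by
        rw [hu₀]; exact_mod_cast ZMod.natCast_rightInverse z
      set A : ℤ := g u₀ with hA
      set q : ℤ := -(A / n) with hq
      have hqn : q * (n : ℤ) = -((n : ℤ) * (A / (n : ℤ))) := by rw [hq]; ring
      have hmod := Int.emod_nonneg A (show (n:ℤ) ≠ 0 by omega)
      have hmod2 := Int.emod_lt_of_pos A hn0
      rw [Int.emod_def] at hmod hmod2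
      set u : ℤ := u₀ + q * n with hudef
      set a : ℤ := A + q * n with ha
      have hclu : ((u : ℤ) : ZMod n) = z := by
        rw [hudef]; push_cast; rw [hclu₀]; simp [ZMod.natCast_self]
      have hgu : g u = a := by rw [hudef, perN_zsmul hperg, ← hA, ha]
      have hgule : g u ≤ u := by
        by_cases hzm1 : z - 1 ∈ X
        · have := (hmemg u).2 (fun hc => hzX (hclu ▸ mem_incList.mp hc))
            (by rw [hclu]; exact mem_incList.mpr hzm1)
          rw [← hgdef] at this
          omega
        · have := phi_fix hn cs (incList n X b) (z := z)
            (fun hc => hzX (mem_incList.mp hc))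
            (fun hc => hzm1 (mem_incList.mp hc)) hclu
          rw [← hgdef] at this
          omega
      have hclu1 : ((u + 1 : ℤ) : ZMod n) = z + 1 := by rw [intCast_add_one, hclu]
      have hgu1 : u + 1 ≤ g (u + 1) := by
        by_cases hz1 : z + 1 ∈ X
        · have := (hmemg (u + 1)).1 (mem_incList.mpr (hclu1 ▸ hz1))
          rw [← hgdef] at this
          omega
        · have := phi_fix hn cs (incList n X b) (z := z + 1)
            (fun hc => hz1 (mem_incList.mp hc))
            (fun hc => hzX (by
              have h6 := mem_incList.mp hc
              rw [show z + 1 - 1 = z from by ring] at h6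
              exact h6)) hclu1
          rw [← hgdef] at this
          omega
      have hfa : f a = u := by
        have := hfgap u
        rw [hgu] at this
        exact this
      have hfb : f (g (u + 1)) = u + 1 := hfgap (u + 1)
      refine ⟨a, g (u + 1), by omega, by omega, by omega, ?_, ?_⟩
      · rw [hfa]; exact hclu
      · rw [hfa, hfb]
  obtain ⟨a, bb, c0, c1, c2, c3, c4⟩ := hasc
  have := invN_asc hn hperf c0 c1 c2 c3 c4
  omega

end Crux

section RTG

variable {n : ℕ} {W : Type*} [Group W]

lemma upTo_erase [NeZero n] {X : Finset (ZMod n)} {z a c : ZMod n} (hz1 : z + 1 ∉ X)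
    (ha : a ≠ z) (hc : c ≠ z) (h : UpTo X a c) : UpTo (X.erase z) a c := by
  obtain ⟨t, hct, hall⟩ := h
  refine ⟨t, hct, fun u hu => Finset.mem_erase.mpr ⟨?_, hall u hu⟩⟩
  intro he
  rcases Nat.eq_zero_or_pos u with rfl | hu0
  · simp at he
    exact ha he
  · rcases eq_or_lt_of_le hu with rfl | hut
    · exact hc (by rw [hct, he])
    · refine hz1 ?_
      have : a + ((u + 1 : ℕ) : ZMod n) = z + 1 := by push_cast; rw [← he]; push_cast; ring
      rw [← this]
      exact hall (u + 1) (by omega)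

lemma sameComponent_erase [NeZero n] {X : Finset (ZMod n)} {z a c : ZMod n} (hz1 : z + 1 ∉ X)
    (ha : a ≠ z) (hc : c ≠ z) (hac : a ≠ c) (h : SameComponent n X a c) :
    SameComponent n (X.erase z) a c := by
  rcases sameComponent_cases h with rfl | hup | hup
  · exact absurd rfl hac
  · exact upTo_sameComponent (upTo_erase hz1 ha hc hup)
  · exact sameComponent_symm (upTo_sameComponent (upTo_erase hz1 hc ha hup))

lemma head_pos [NeZero n] {X : Finset (ZMod n)} (hXp : ∃ w : ZMod n, w ∉ X) {z a : ZMod n}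
    (hz1 : z + 1 ∉ X) (haz : a ≠ z) {b : ZMod n} (hb : b ∉ X)
    (hsc : SameComponent n X z a) : posIn n b a < posIn n b z := by
  rcases sameComponent_cases hsc with h | hup | hup
  · exact absurd h.symm haz
  · obtain ⟨t, hct, hall⟩ := hup
    exfalso
    rcases Nat.eq_zero_or_pos t with rfl | ht0
    · simp at hct
      exact haz hct
    · refine hz1 ?_
      have h1 : z + ((1 : ℕ) : ZMod n) ∈ X := hall 1 (by omega)
      simpa using h1
  · exact upTo_pos hXp hup (fun hc => haz hc) hb

/-- (iii), hard direction: every reduced word for `h_X` is a good word. -/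
lemma reduced_to_good (hn : 2 ≤ n) (cs : CoxeterSystem (affineA n) W) :
    ∀ (l : List (ZMod n)) (X : Finset (ZMod n)) (b : ZMod n), b ∉ X →
    cs.wordProd l = cs.wordProd (hWord n X b) → cs.IsReduced l → GoodW n X l := by
  haveI : NeZero n := ⟨by omega⟩
  intro l
  induction l with
  | nil =>
    intro X b hb hprod _
    have hcard : X.card = 0 := by
      have h1 := hword_length hn cs ⟨b, hb⟩ hb
      rw [← hprod, CoxeterSystem.wordProd_nil] at h1
      simpa using h1.symm
    have hX : X = ∅ := Finset.card_eq_zero.mp hcard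
    subst hX
    exact ⟨List.nodup_nil, fun z => by simp, fun b' _ => List.Pairwise.nil⟩
  | cons z t ih =>
    intro X b hb hprod hred
    have hXp : ∃ w : ZMod n, w ∉ X := ⟨b, hb⟩
    have hlenH : cs.length (cs.wordProd (hWord n X b)) = X.card := hword_length hn cs hXp hb
    have hcard : X.card = t.length + 1 := by
      have := hred
      unfold CoxeterSystem.IsReduced at this
      rw [hprod] at this
      rw [← hlenH, this]
      simp
    have hPt : cs.wordProd t = cs.simple z * cs.wordProd (hWord n X b) := by
      rw [← hprod, cs.wordProd_cons, ← mul_assoc, cs.simple_mul_simple_self, one_mul]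
    have hdesc : cs.length (cs.simple z * cs.wordProd (hWord n X b)) <
        cs.length (cs.wordProd (hWord n X b)) := by
      rw [← hPt, hlenH]
      calc cs.length (cs.wordProd t) ≤ t.length := cs.length_wordProd_le t
        _ < X.card := by omega
    obtain ⟨hzX, hz1⟩ := descent_mem hn cs hb hdesc
    set X' := X.erase z with hX'
    have hb' : b ∉ X' := fun hc => hb (Finset.mem_of_mem_erase hc)
    have hXp' : ∃ w : ZMod n, w ∉ X' := ⟨z, Finset.notMem_erase z X⟩
    -- z :: hWord X' b is a good word for X
    have hgood1 : GoodW n X (z :: hWord n X' b) := by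
      refine ⟨?_, ?_, ?_⟩
      · refine List.nodup_cons.mpr ⟨?_, nodup_hWord⟩
        rw [mem_hWord]
        exact Finset.notMem_erase z X
      · intro a
        rw [List.mem_cons, mem_hWord, hX', Finset.mem_erase]
        constructor
        · rintro (rfl | ⟨-, haX⟩)
          · exact hzX
          · exact haX
        · intro haX
          by_cases haz : a = z
          · exact Or.inl haz
          · exact Or.inr ⟨haz, haX⟩
      · intro b'' hb''
        refine List.pairwise_cons.mpr ⟨?_, ?_⟩
        · intro a ha hsc
          have haz : a ≠ z := by
            rw [mem_hWord, hX', Finset.mem_erase] at ha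
            exact ha.1
          exact head_pos hXp hz1 haz hb'' hsc
        · refine List.Pairwise.imp ?_ (pairwise_hWord (X := X') (b := b))
          intro a c hlt hsc
          exact pos_transfer hXp (sameComponent_symm hsc) (posIn_lt_ne hlt) hb hb'' hlt
    have hprod1 : cs.simple z * cs.wordProd (hWord n X' b) = cs.wordProd (hWord n X b) := by
      have := good_wordProd_eq hn cs hXp hgood1 (good_hWord hXp hb)
      rw [cs.wordProd_cons] at this
      exact this
    have hPt' : cs.wordProd t = cs.wordProd (hWord n X' b) := by
      rw [hPt, ← hprod1, ← mul_assoc, cs.simple_mul_simple_self, one_mul]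
    have hcard' : X'.card = t.length := by
      rw [hX', Finset.card_erase_of_mem hzX]
      omega
    have hredt : cs.IsReduced t := by
      show cs.length (cs.wordProd t) = t.length
      rw [hPt', hword_length hn cs hXp' hb', hcard']
    have hgoodt : GoodW n X' t := ih X' b hb' hPt' hredt
    -- assemble goodness of z :: t for X
    refine ⟨?_, ?_, ?_⟩
    · refine List.nodup_cons.mpr ⟨?_, hgoodt.1⟩
      intro hc
      have := (hgoodt.2.1 z).mp hc
      rw [hX', Finset.mem_erase] at this
      exact this.1 rfl
    · intro a
      rw [List.mem_cons, hgoodt.2.1 a, hX', Finset.mem_erase]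
      constructor
      · rintro (rfl | ⟨-, haX⟩)
        · exact hzX
        · exact haX
      · intro haX
        by_cases haz : a = z
        · exact Or.inl haz
        · exact Or.inr ⟨haz, haX⟩
    · intro b'' hb''
      have hb''' : b'' ∉ X' := fun hc => hb'' (Finset.mem_of_mem_erase hc)
      refine List.pairwise_cons.mpr ⟨?_, ?_⟩
      · intro a ha hsc
        have haz : a ≠ z := by
          have := (hgoodt.2.1 a).mp ha
          rw [hX', Finset.mem_erase] at this
          exact this.1
        exact head_pos hXp hz1 haz hb'' hsc
      · have hpw := good_nodup_pairwise hgoodt hb'''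
        refine List.Pairwise.imp_of_mem ?_ hpw
        rintro a c ha hc ⟨hac, himp⟩ hsc
        have haz : a ≠ z := by
          have := (hgoodt.2.1 a).mp ha
          rw [hX', Finset.mem_erase] at this
          exact this.1
        have hcz : c ≠ z := by
          have := (hgoodt.2.1 c).mp hc
          rw [hX', Finset.mem_erase] at this
          exact this.1
        exact himp (sameComponent_erase hz1 haz hcz hac hsc)

end RTG

theorem statement_6 (n : ℕ) (hn : 2 ≤ n) {W : Type*} [Group W]
    (cs : CoxeterSystem (affineA n) W)
    (X : Finset (ZMod n)) (hX : (X : Set (ZMod n)) ≠ Set.univ)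
    (al : ZMod n) (hal : al ∉ X) :
    -- (i) `h_X` does not depend on the choice of `ℵ ∉ X`
    (∀ al' : ZMod n, al' ∉ X →
      cs.wordProd (hWord n X al) = cs.wordProd (hWord n X al')) ∧
    -- (ii) `ℓ(h_X) = |X|`
    cs.length (cs.wordProd (hWord n X al)) = X.card ∧
    -- (iii) characterization of the reduced expressions of `h_X`
    (∀ l : List (ZMod n),
      (cs.wordProd l = cs.wordProd (hWord n X al) ∧ cs.IsReduced l) ↔
      (l.Nodup ∧ (∀ z : ZMod n, z ∈ l ↔ z ∈ X) ∧
        (∀ al' : ZMod n, al' ∉ X →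
          l.Pairwise (fun a b => SameComponent n X a b →
            posIn n al' b < posIn n al' a)))) ∧
    -- (iv) any two reduced expressions for `h_X` are related by commutation moves
    (∀ l l' : List (ZMod n),
      (cs.wordProd l = cs.wordProd (hWord n X al) ∧ cs.IsReduced l) →
      (cs.wordProd l' = cs.wordProd (hWord n X al) ∧ cs.IsReduced l') →
      Relation.ReflTransGen (CommMove n) l l') := by
  haveI : NeZero n := ⟨by omega⟩
  have hXp : ∃ w : ZMod n, w ∉ X := ⟨al, hal⟩
  have hgood : GoodW n X (hWord n X al) := good_hWord hXp hal
  refine ⟨?_, ?_, ?_, ?_⟩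
  · intro al' hal'
    exact good_wordProd_eq hn cs hXp hgood (good_hWord hXp hal')
  · exact hword_length hn cs hXp hal
  · intro l
    constructor
    · rintro ⟨hprod, hred⟩
      obtain ⟨h1, h2, h3⟩ := reduced_to_good hn cs l X al hal hprod hred
      exact ⟨h1, h2, fun al' h => h3 al' h⟩
    · rintro ⟨h1, h2, h3⟩
      have hGl : GoodW n X l := ⟨h1, h2, fun b hb => h3 b hb⟩
      refine ⟨good_wordProd_eq hn cs hXp hGl hgood, ?_⟩
      show cs.length (cs.wordProd l) = l.length
      rw [good_wordProd_eq hn cs hXp hGl hgood, hword_length hn cs hXp hal, good_length hGl]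
  · rintro l l' ⟨hp, hr⟩ ⟨hp', hr'⟩
    have g1 := reduced_to_good hn cs l X al hal hp hr
    have g2 := reduced_to_good hn cs l' X al hal hp' hr'
    exact good_rtg l' X l hXp g1 g2
end

section
/- In the cylindrical braid group Br_extg: (a) the elements y_1, …, y_n pairwise commute: y_i y_j = y_j y_i for all 1 ≤ i, j ≤ n; (b) y_1 y_2 ⋯ y_n = ω^n; (c) the group homomorphism ℤ^n → Br_extg sending λ ↦ w_λ (well defined by (a)) is injective, so the subgroup of Br_extg generated by {y_1, …, y_n} is free abelian of rank n. -/
/-- Generators of the cylindrical braid group: `f i` for `i ∈ ℤ/nℤ`, and `ω`. -/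
inductive ExtGen (n : ℕ) : Type
  | f : ZMod n → ExtGen n
  | om : ExtGen n

open FreeGroup in
/-- The defining relations of the cylindrical braid group `Br_extg`:
`f_i f_{i+1} f_i = f_{i+1} f_i f_{i+1}` (imposed only when `n ≥ 3`),
`f_i f_j = f_j f_i` for `j ∉ {i−1, i, i+1}`, and `ω f_i ω⁻¹ = f_{i+1}`. -/
def extRels (n : ℕ) : Set (FreeGroup (ExtGen n)) :=
  {r | (∃ i : ZMod n, 3 ≤ n ∧
          r = of (ExtGen.f i) * of (ExtGen.f (i + 1)) * of (ExtGen.f i) *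
              (of (ExtGen.f (i + 1)) * of (ExtGen.f i) * of (ExtGen.f (i + 1)))⁻¹) ∨
       (∃ i j : ZMod n, j ≠ i - 1 ∧ j ≠ i ∧ j ≠ i + 1 ∧
          r = of (ExtGen.f i) * of (ExtGen.f j) * (of (ExtGen.f j) * of (ExtGen.f i))⁻¹) ∨
       (∃ i : ZMod n,
          r = of ExtGen.om * of (ExtGen.f i) * (of ExtGen.om)⁻¹ * (of (ExtGen.f (i + 1)))⁻¹)}

/-- The cylindrical braid group `Br_extg`. -/
abbrev BrExt (n : ℕ) : Type := PresentedGroup (extRels n)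

/-- The generator `f_i` of `Br_extg`. -/
def fB (n : ℕ) (i : ZMod n) : BrExt n := PresentedGroup.of (ExtGen.f i)

/-- The generator `ω` of `Br_extg`. -/
def omB (n : ℕ) : BrExt n := PresentedGroup.of ExtGen.om

/-- `y_i = f_{i−1}⁻¹ ⋯ f_2⁻¹ f_1⁻¹ · ω · f_{n−1} f_{n−2} ⋯ f_{i+1} f_i`, for `1 ≤ i ≤ n`. -/
def yB (n : ℕ) (i : ℕ) : BrExt n :=
  (((List.range (i - 1)).reverse.map (fun k => (fB n ((k + 1 : ℕ) : ZMod n))⁻¹)).prod)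
    * omB n *
  (((List.range (n - i)).map (fun k => fB n ((n - 1 - k : ℕ) : ZMod n))).prod)

/-- `w_λ = y_1^{x_1} y_2^{x_2} ⋯ y_n^{x_n}` for `λ = (x_1, …, x_n) ∈ ℤ^n`. -/
def wB (n : ℕ) (lam : Fin n → ℤ) : BrExt n :=
  (List.ofFn (fun k : Fin n => yB n ((k : ℕ) + 1) ^ lam k)).prod

/-!
Index the generators by ℤ, `f a = f_{a mod n}`, and write `chain a d m = f_a f_{a+d} ⋯ f_{a+(m-1)d}`
(`d = ±1`) for a run of consecutive generators. By the braid relations, a letter `f_k` of a run of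
length `< n`, other than its last, passes through the run as `f_{k+d}`; passing through ω shifts
every index by one.

(a) With `P = f_1 ⋯ f_{i-1}`, `Q = f_{n-1} ⋯ f_{i+1}` and `Z = P⁻¹ ω Q` we have `y_i = Z f_i` and
`y_{i+1} = f_i⁻¹ Z`, so `y_i` and `y_{i+1}` commute iff `f_i` commutes with
`Z² = (P' P)⁻¹ ω² (Q' Q)`, where `P'`, `Q'` are `P`, `Q` with indices moved one step towards `i`;
the run identities carry `f_i` through `(P' P)⁻¹` to `f_1`, through `ω²` to `f_{n-1}` and through
`Q' Q` back to `f_i`. Since `y_{i+1} = f_i⁻¹ y_i f_i⁻¹` and `f_j` commutes with `y_i` for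
`j ∉ {i-1, i}`, induction gives all other pairs.
(b) By induction on `k`, `y_1 ⋯ y_k = (ω f_{n-1} ⋯ f_k)^k`.
(c) Sending `f_i` to the permutation of ℤ exchanging `x` and `x + 1` for every `x ≡ i`, and ω to
`x ↦ x + 1`, defines a representation in which `y_i` adds `n` on the residue class of `i` and fixes
the other classes; so `w_λ` sends `k` to `k + n λ_k` for `1 ≤ k ≤ n`.
-/

lemma ZMod.intCast_eq_intCast_iff_of_lt {n : ℕ} {x y : ℤ} (h1 : x - y < n) (h2 : y - x < n) :
    (x : ZMod n) = y ↔ x = y := by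
  rw [ZMod.intCast_eq_intCast_iff_dvd_sub]
  refine ⟨fun h => ?_, fun h => by simp [h]⟩
  have := Int.eq_zero_of_abs_lt_dvd h (abs_lt.mpr ⟨by omega, by omega⟩)
  omega

lemma ZMod.exists_intCast_eq_le_lt_add {n : ℕ} [NeZero n] (i : ZMod n) (x : ℤ) :
    ∃ a : ℤ, (a : ZMod n) = i ∧ a ≤ x ∧ x < a + n := by
  have hn : (0 : ℤ) < n := by have := NeZero.pos n; omega
  refine ⟨x - (x - i.cast) % n, ?_, by linarith [Int.emod_nonneg (x - i.cast) hn.ne'],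
    by linarith [Int.emod_lt_of_pos (x - i.cast) hn]⟩
  rw [Int.emod_def]
  simp

/-! ### Affine permutations of ℤ -/

namespace AffinePerm

variable {n : ℕ}

lemma intCast_add_mul_self (x e : ℤ) : ((x + n * e : ℤ) : ZMod n) = x := by
  simp

def transl (n : ℕ) : Multiplicative (ZMod n → ℤ) →* Equiv.Perm ℤ where
  toFun c :=
    { toFun := fun x => x + n * c.toAdd x
      invFun := fun x => x + n * -c.toAdd x
      left_inv := fun x => by simp only [intCast_add_mul_self]; ring
      right_inv := fun x => by simp only [intCast_add_mul_self]; ring }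
  map_one' := by ext; simp
  map_mul' c d := by ext x; simp; ring

lemma transl_apply (c : Multiplicative (ZMod n → ℤ)) (x : ℤ) :
    transl n c x = x + n * c.toAdd x := rfl

def shift : Equiv.Perm ℤ := Equiv.addRight 1

variable [Fact (1 < n)]

def adjSwap (n : ℕ) [Fact (1 < n)] (i : ZMod n) : Equiv.Perm ℤ :=
  Function.Involutive.toPerm
    (fun x => if (x : ZMod n) = i then x + 1 else if (x : ZMod n) = i + 1 then x - 1 else x)
    fun x => by
      by_cases h0 : (x : ZMod n) = i
      · simp [h0]
      · by_cases h1 : (x : ZMod n) = i + 1 <;> simp [h0, h1]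

lemma adjSwap_apply (i : ZMod n) (x : ℤ) : adjSwap n i x =
    if (x : ZMod n) = i then x + 1 else if (x : ZMod n) = i + 1 then x - 1 else x := rfl

lemma adjSwap_adjSwap (i : ZMod n) (x : ℤ) : adjSwap n i (adjSwap n i x) = x :=
  Function.Involutive.toPerm_involutive _ x

lemma adjSwap_inv (i : ZMod n) : (adjSwap n i)⁻¹ = adjSwap n i :=
  Function.Involutive.toPerm_symm _

/-- Within `n` consecutive integers, residues mod `n` are compared as integers. The identities
below are checked pointwise after choosing such a window around the point. -/
lemma adjSwap_intCast_apply {a x : ℤ} (h1 : a + 1 - n < x) (h2 : x < a + n) :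
    adjSwap n a x = if x = a then x + 1 else if x = a + 1 then x - 1 else x := by
  have e1 := ZMod.intCast_eq_intCast_iff_of_lt (n := n) (x := x) (y := a) (by omega) (by omega)
  have e2 := ZMod.intCast_eq_intCast_iff_of_lt (n := n) (x := x) (y := a + 1) (by omega) (by omega)
  push_cast at e2
  simp only [adjSwap_apply, e1, e2]

lemma adjSwap_braid (hn : 3 ≤ n) (i : ZMod n) :
    adjSwap n i * adjSwap n (i + 1) * adjSwap n i =
      adjSwap n (i + 1) * adjSwap n i * adjSwap n (i + 1) := by
  ext x
  obtain ⟨a, rfl, hax, hxa⟩ := ZMod.exists_intCast_eq_le_lt_add i x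
  rw [← Int.cast_one (R := ZMod n), ← Int.cast_add]
  simp only [Equiv.Perm.mul_apply]
  simp (disch := omega) only [adjSwap_intCast_apply]
  omega

lemma adjSwap_mul_comm {i j : ZMod n} (h1 : j ≠ i - 1) (h2 : j ≠ i) (h3 : j ≠ i + 1) :
    adjSwap n i * adjSwap n j = adjSwap n j * adjSwap n i := by
  ext x
  obtain ⟨a, rfl, hax, hxa⟩ := ZMod.exists_intCast_eq_le_lt_add i x
  obtain ⟨c, rfl, hca, hac⟩ := ZMod.exists_intCast_eq_le_lt_add j (a + n - 1)
  have hc : a + 2 ≤ c ∧ c ≤ a + n - 2 := by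
    refine ⟨?_, ?_⟩
    · by_contra hc
      obtain rfl | rfl : c = a ∨ c = a + 1 := by omega
      · exact h2 rfl
      · exact h3 (by push_cast; rfl)
    · by_contra hc
      obtain rfl : c = a + n - 1 := by omega
      exact h1 (by push_cast; simp)
  simp only [Equiv.Perm.mul_apply]
  simp (disch := omega) only [adjSwap_intCast_apply]
  omega

lemma shift_mul_adjSwap (i : ZMod n) : shift * adjSwap n i = adjSwap n (i + 1) * shift := by
  have : 1 < n := Fact.out
  ext x
  obtain ⟨a, rfl, hax, hxa⟩ := ZMod.exists_intCast_eq_le_lt_add i x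
  rw [← Int.cast_one (R := ZMod n), ← Int.cast_add]
  simp only [Equiv.Perm.mul_apply, shift, Equiv.coe_addRight]
  simp (disch := omega) only [adjSwap_intCast_apply]
  omega

lemma adjSwap_add_mul (i : ZMod n) (x e : ℤ) :
    adjSwap n i (x + n * e) = adjSwap n i x + n * e := by
  simp only [adjSwap_apply, intCast_add_mul_self]
  split_ifs <;> ring

lemma intCast_adjSwap (i : ZMod n) (x : ℤ) :
    ((adjSwap n i x : ℤ) : ZMod n) = Equiv.swap i (i + 1) (x : ZMod n) := by
  rw [adjSwap_apply, Equiv.swap_apply_def]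
  split_ifs <;> simp_all

lemma adjSwap_mul_transl_mul_adjSwap (i : ZMod n) (c : ZMod n → ℤ) :
    adjSwap n i * transl n (.ofAdd c) * adjSwap n i =
      transl n (.ofAdd (c ∘ Equiv.swap i (i + 1))) := by
  ext x
  simp only [Equiv.Perm.mul_apply, transl_apply, toAdd_ofAdd, Function.comp_apply,
    adjSwap_add_mul, intCast_adjSwap, adjSwap_adjSwap]

end AffinePerm

/-! ### Runs of consecutive generators -/

namespace BrExt

variable {n : ℕ}

lemma omB_mul_fB (i : ZMod n) : omB n * fB n i = fB n (i + 1) * omB n := by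
  have h := PresentedGroup.mk_eq_mk_of_mul_inv_mem (rels := extRels n) (Or.inr (Or.inr ⟨i, rfl⟩))
  simp only [map_mul, map_inv] at h
  exact mul_inv_eq_iff_eq_mul.mp h

lemma fB_mul_fB_comm {i j : ZMod n} (h1 : j ≠ i - 1) (h2 : j ≠ i) (h3 : j ≠ i + 1) :
    fB n i * fB n j = fB n j * fB n i := by
  have h := PresentedGroup.mk_eq_mk_of_mul_inv_mem (rels := extRels n)
    (Or.inr (Or.inl ⟨i, j, h1, h2, h3, rfl⟩))
  simp only [map_mul] at h
  exact h

lemma fB_braid (hn : 3 ≤ n) (i : ZMod n) :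
    fB n i * fB n (i + 1) * fB n i = fB n (i + 1) * fB n i * fB n (i + 1) := by
  have h := PresentedGroup.mk_eq_mk_of_mul_inv_mem (rels := extRels n) (Or.inl ⟨i, hn, rfl⟩)
  simp only [map_mul] at h
  exact h

/-- The generators indexed by ℤ, so that no index arithmetic below truncates. -/
def f (n : ℕ) (a : ℤ) : BrExt n := fB n a

lemma f_congr {a b : ℤ} (h : (a : ZMod n) = b) : f n a = f n b := by
  rw [f, f, h]

lemma omB_mul_f (a : ℤ) : omB n * f n a = f n (a + 1) * omB n := by
  simpa [f] using omB_mul_fB (a : ZMod n)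

lemma commute_f {k l : ℤ} (h1 : 2 ≤ l - k) (h2 : l - k ≤ n - 2) : Commute (f n k) (f n l) := by
  refine fB_mul_fB_comm ?_ ?_ ?_
  · rw [← Int.cast_one, ← Int.cast_sub, Ne, ZMod.intCast_eq_intCast_iff_of_lt (by omega) (by omega)]
    omega
  · rw [Ne, ZMod.intCast_eq_intCast_iff_of_lt (by omega) (by omega)]
    omega
  · rw [← Int.cast_one, ← Int.cast_add, Ne, ZMod.intCast_eq_intCast_iff_of_lt (by omega) (by omega)]
    omega

lemma f_braid (hn : 3 ≤ n) (k : ℤ) :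
    f n k * f n (k + 1) * f n k = f n (k + 1) * f n k * f n (k + 1) := by
  simpa [f] using fB_braid hn (k : ZMod n)

def chain (n : ℕ) (a d : ℤ) (m : ℕ) : BrExt n :=
  ((List.range m).map fun t : ℕ => f n (a + d * t)).prod

@[simp] lemma chain_zero (a d : ℤ) : chain n a d 0 = 1 := rfl

lemma chain_succ (a d : ℤ) (m : ℕ) : chain n a d (m + 1) = chain n a d m * f n (a + d * m) :=
  List.prod_range_succ (fun t : ℕ => f n (a + d * t)) m

lemma chain_succ' (a d : ℤ) (m : ℕ) : chain n a d (m + 1) = f n a * chain n (a + d) d m := by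
  rw [chain, List.prod_range_succ', Nat.cast_zero, mul_zero, add_zero, chain]
  congr 2
  exact List.map_congr_left fun t _ => congrArg (f n) (by push_cast; ring)

lemma chain_add (a d : ℤ) (k l : ℕ) :
    chain n a d (k + l) = chain n a d k * chain n (a + d * k) d l := by
  rw [chain, List.range_add, List.map_append, List.prod_append, List.map_map, chain, chain]
  congr 2
  exact List.map_congr_left fun t _ => congrArg (f n) (by push_cast; ring)

lemma chain_congr {a b : ℤ} (h : (a : ZMod n) = b) (d : ℤ) (m : ℕ) :
    chain n a d m = chain n b d m := by
  simp only [chain]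
  congr 1
  exact List.map_congr_left fun t _ => f_congr (by push_cast [h]; rfl)

lemma mul_chain_eq {X : BrExt n} {a c d : ℤ} {m : ℕ}
    (h : ∀ t < m, X * f n (a + d * t) = f n (a + c + d * t) * X) :
    X * chain n a d m = chain n (a + c) d m * X := by
  induction m with
  | zero => simp
  | succ m ih =>
    rw [chain_succ, chain_succ, ← mul_assoc, ih fun t ht => h t (by omega), mul_assoc,
      h m (by omega), mul_assoc]

lemma omB_mul_chain (a d : ℤ) (m : ℕ) : omB n * chain n a d m = chain n (a + 1) d m * omB n :=
  mul_chain_eq fun t _ => by rw [omB_mul_f, add_right_comm]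

lemma commute_chain {X : BrExt n} {a d : ℤ} {m : ℕ} (h : ∀ t < m, Commute X (f n (a + d * t))) :
    Commute X (chain n a d m) := by
  have := mul_chain_eq (c := 0) fun t ht => by simpa using (h t ht).eq
  rwa [add_zero] at this

lemma chain_mul_f {a d k : ℤ} {m t : ℕ} (hd : d = 1 ∨ d = -1) (hm : m < n) (ht : t + 1 < m)
    (hk : k = a + d * t) : chain n a d m * f n k = f n (k + d) * chain n a d m := by
  obtain ⟨r, rfl⟩ : ∃ r, m = t + 2 + r := ⟨m - (t + 2), by omega⟩
  have hsplit : chain n a d (t + 2 + r) =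
      chain n a d t * f n k * f n (k + d) * chain n (a + d * (t + 2 : ℕ)) d r := by
    rw [chain_add, chain_succ, chain_succ, hk, show a + d * ((t + 1 : ℕ) : ℤ) = a + d * t + d by
      push_cast; ring]
  set L := chain n a d t
  set R := chain n (a + d * (t + 2 : ℕ)) d r
  have hR : Commute (f n k) R := commute_chain fun s hs => by
    rcases hd with rfl | rfl
    · exact commute_f (by omega) (by omega)
    · exact (commute_f (by omega) (by omega)).symm
  have hL : Commute (f n (k + d)) L := commute_chain fun s hs => by
    rcases hd with rfl | rfl
    · exact (commute_f (by omega) (by omega)).symm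
    · exact commute_f (by omega) (by omega)
  have hbraid : f n k * f n (k + d) * f n k = f n (k + d) * f n k * f n (k + d) := by
    rcases hd with rfl | rfl
    · exact f_braid (by omega) k
    · simpa using (f_braid (n := n) (by omega) (k + -1)).symm
  rw [hsplit]
  calc L * f n k * f n (k + d) * R * f n k = L * (f n k * f n (k + d) * f n k) * R := by
        rw [mul_assoc _ R, ← hR.eq]; group
    _ = f n (k + d) * (L * f n k * f n (k + d) * R) := by
        rw [hbraid, ← mul_assoc, ← mul_assoc, ← hL.eq]; group

lemma chain_succ_mul_chain {a d : ℤ} {m : ℕ} (hd : d = 1 ∨ d = -1) (hm : m + 1 < n) :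
    chain n a d (m + 1) * chain n a d m = chain n (a + d) d m * chain n a d (m + 1) :=
  mul_chain_eq fun t ht => by
    rw [chain_mul_f hd hm (by omega) rfl, add_right_comm]

/-! ### The elements `y_i` -/

variable {i j : ℕ}

lemma chain_one_eq_mul_f (h : 1 ≤ i) : chain n 1 1 i = chain n 1 1 (i - 1) * f n i := by
  conv_lhs => rw [show i = i - 1 + 1 by omega]
  rw [chain_succ]
  push_cast [h]
  ring_nf

lemma chain_one_eq_f_mul (h : 1 ≤ i) : chain n 1 1 i = f n 1 * chain n 2 1 (i - 1) := by
  conv_lhs => rw [show i = i - 1 + 1 by omega]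
  rw [chain_succ']
  norm_num

lemma chain_sub_one_eq_mul_f (h : i < n) :
    chain n (n - 1) (-1) (n - i) = chain n (n - 1) (-1) (n - 1 - i) * f n i := by
  conv_lhs => rw [show n - i = n - 1 - i + 1 by omega]
  rw [chain_succ]
  push_cast [show i ≤ n - 1 by omega, show 1 ≤ n by omega]
  ring_nf

lemma chain_sub_one_eq_f_mul (h : i < n) :
    chain n (n - 1) (-1) (n - i) = f n (n - 1) * chain n (n - 2) (-1) (n - 1 - i) := by
  conv_lhs => rw [show n - i = n - 1 - i + 1 by omega]
  rw [chain_succ']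
  ring_nf

lemma chain_two_mul_chain_one_mul_f (h1 : 1 ≤ i) (h2 : i < n) :
    chain n 2 1 (i - 1) * chain n 1 1 (i - 1) * f n i =
      f n 1 * (chain n 2 1 (i - 1) * chain n 1 1 (i - 1)) := by
  have h := chain_succ_mul_chain (n := n) (a := 1) (m := i - 1) (Or.inl rfl) (by omega)
  rw [show i - 1 + 1 = i by omega, show (1 : ℤ) + 1 = 2 by norm_num] at h
  rw [mul_assoc, ← chain_one_eq_mul_f h1, ← h, chain_one_eq_f_mul h1, mul_assoc]

lemma chain_sub_two_mul_chain_sub_one_mul_f (h1 : 1 ≤ i) (h2 : i < n) :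
    chain n (n - 2) (-1) (n - 1 - i) * chain n (n - 1) (-1) (n - 1 - i) * f n i =
      f n (n - 1) * (chain n (n - 2) (-1) (n - 1 - i) * chain n (n - 1) (-1) (n - 1 - i)) := by
  have h' := chain_succ_mul_chain (n := n) (a := n - 1) (m := n - 1 - i) (Or.inr rfl) (by omega)
  rw [show n - 1 - i + 1 = n - i by omega, show (n : ℤ) - 1 + -1 = n - 2 by ring] at h'
  rw [mul_assoc, ← chain_sub_one_eq_mul_f h2, ← h', chain_sub_one_eq_f_mul h2, mul_assoc]

lemma f_one_mul_omB_mul_omB : f n 1 * (omB n * omB n) = omB n * omB n * f n (n - 1) := by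
  have h : f n (n - 1 + 1 + 1) = f n 1 := f_congr (by push_cast; simp)
  symm
  calc omB n * omB n * f n (n - 1) = omB n * (omB n * f n (n - 1)) := mul_assoc _ _ _
    _ = f n 1 * (omB n * omB n) := by rw [omB_mul_f, ← mul_assoc, omB_mul_f, mul_assoc, h]

lemma yB_eq_chain (i : ℕ) :
    yB n i = (chain n 1 1 (i - 1))⁻¹ * omB n * chain n (n - 1) (-1) (n - i) := by
  rw [yB, chain, List.prod_inv_reverse, List.map_map, ← List.map_reverse, chain]
  congr 2
  · congr 1
    exact List.map_congr_left fun t _ => by simp [f, add_comm]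
  · refine List.map_congr_left fun t ht => ?_
    rw [List.mem_range] at ht
    simp only [f]
    congr 1
    push_cast [show t ≤ n - 1 by omega, show 1 ≤ n by omega]
    ring

lemma yB_eq_mul_f (h : i < n) :
    yB n i = (chain n 1 1 (i - 1))⁻¹ * omB n * chain n (n - 1) (-1) (n - 1 - i) * f n i := by
  rw [yB_eq_chain, chain_sub_one_eq_mul_f h]
  simp only [mul_assoc]

lemma yB_succ_eq_inv_mul (h1 : 1 ≤ i) (h2 : i < n) :
    yB n (i + 1) =
      (f n i)⁻¹ * ((chain n 1 1 (i - 1))⁻¹ * omB n * chain n (n - 1) (-1) (n - 1 - i)) := by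
  rw [yB_eq_chain, Nat.add_sub_cancel, chain_one_eq_mul_f h1, show n - (i + 1) = n - 1 - i by omega]
  group

lemma yB_succ (h1 : 1 ≤ i) (h2 : i < n) : yB n (i + 1) = (f n i)⁻¹ * yB n i * (f n i)⁻¹ := by
  rw [yB_succ_eq_inv_mul h1 h2, yB_eq_mul_f h2]
  group

lemma commute_yB_succ (h1 : 1 ≤ i) (h2 : i < n) : Commute (yB n i) (yB n (i + 1)) := by
  set P := chain n 1 1 (i - 1)
  set Q := chain n (n - 1) (-1) (n - 1 - i)
  set P' := chain n 2 1 (i - 1)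
  set Q' := chain n (n - 2) (-1) (n - 1 - i)
  set Z := P⁻¹ * omB n * Q
  have hPQ : Commute P Q := commute_chain fun t ht =>
    (commute_chain fun u hu => (commute_f (by omega) (by omega)).symm).symm
  have hωP : omB n * P⁻¹ = P'⁻¹ * omB n := by
    have h : omB n * P = P' * omB n := by simpa [P'] using omB_mul_chain (n := n) 1 1 (i - 1)
    rw [show P' = omB n * P * (omB n)⁻¹ by rw [h]; group]
    group
  have hωQ : Q * omB n = omB n * Q' := by
    have h := omB_mul_chain (n := n) (n - 2) (-1) (n - 1 - i)
    rwa [show (n : ℤ) - 2 + 1 = n - 1 by ring, eq_comm] at h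
  have hP : P' * P * f n i = f n 1 * (P' * P) := chain_two_mul_chain_one_mul_f h1 h2
  have hQ : Q' * Q * f n i = f n (n - 1) * (Q' * Q) := chain_sub_two_mul_chain_sub_one_mul_f h1 h2
  have hZ : Z * Z = (P' * P)⁻¹ * (omB n * omB n) * (Q' * Q) := by
    calc Z * Z = P⁻¹ * omB n * (Q * P⁻¹) * omB n * Q := by simp only [Z]; group
      _ = P⁻¹ * (omB n * P⁻¹) * (Q * omB n) * Q := by rw [← hPQ.inv_left.eq]; group
      _ = (P' * P)⁻¹ * (omB n * omB n) * (Q' * Q) := by rw [hωP, hωQ]; group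
  have hfZ : f n i * (Z * Z) = Z * Z * f n i := by
    rw [hZ]
    calc f n i * ((P' * P)⁻¹ * (omB n * omB n) * (Q' * Q))
        = (P' * P)⁻¹ * (P' * P * f n i) * (P' * P)⁻¹ * (omB n * omB n) * (Q' * Q) := by group
      _ = (P' * P)⁻¹ * (f n 1 * (omB n * omB n)) * (Q' * Q) := by
          rw [hP]; group
      _ = (P' * P)⁻¹ * (omB n * omB n) * (Q' * Q * f n i) := by
          rw [f_one_mul_omB_mul_omB, hQ]; group
      _ = _ := by group
  rw [yB_eq_mul_f h2, yB_succ_eq_inv_mul h1 h2]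
  calc Z * f n i * ((f n i)⁻¹ * Z) = (f n i)⁻¹ * (f n i * (Z * Z)) := by group
    _ = (f n i)⁻¹ * Z * (Z * f n i) := by rw [hfZ]; group

lemma commute_f_yB (hi : 1 ≤ i) (hin : i ≤ n) (hj : 1 ≤ j) (hjn : j < n) (hji : j ≠ i)
    (hji' : j + 1 ≠ i) : Commute (f n j) (yB n i) := by
  rw [yB_eq_chain]
  set P := chain n 1 1 (i - 1)
  set C := chain n (n - 1) (-1) (n - i)
  rcases lt_or_gt_of_ne hji with hlt | hgt
  · have hP : P * f n j = f n (j + 1) * P :=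
      chain_mul_f (Or.inl rfl) (by omega) (t := j - 1) (by omega) (by omega)
    have hP' : f n j * P⁻¹ = P⁻¹ * f n (j + 1) := by
      rw [eq_inv_mul_iff_mul_eq, ← mul_assoc, hP, mul_inv_cancel_right]
    have hC : Commute (f n j) C := commute_chain fun u hu => commute_f (by omega) (by omega)
    calc f n j * (P⁻¹ * omB n * C) = P⁻¹ * (f n (j + 1) * omB n) * C := by
          rw [← mul_assoc, ← mul_assoc, hP']; group
      _ = P⁻¹ * omB n * C * f n j := by rw [← omB_mul_f, mul_assoc, mul_assoc, hC.eq]; group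
  · have hP : Commute (f n j) P :=
      commute_chain fun u hu => (commute_f (by omega) (by omega)).symm
    have hC : C * f n j = f n (j - 1) * C :=
      chain_mul_f (Or.inr rfl) (by omega) (t := n - 1 - j) (by omega) (by omega)
    calc f n j * (P⁻¹ * omB n * C) = P⁻¹ * omB n * (f n (j - 1) * C) := by
          rw [← mul_assoc, ← mul_assoc, hP.inv_right.eq, mul_assoc _ (f n j),
            show f n j = f n (j - 1 + 1) by ring_nf, ← omB_mul_f]
          group
      _ = P⁻¹ * omB n * C * f n j := by rw [← hC]; group

lemma commute_yB_of_lt (hi : 1 ≤ i) (hij : i < j) (hjn : j ≤ n) : Commute (yB n i) (yB n j) := by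
  induction j, hij using Nat.le_induction with
  | base => exact commute_yB_succ hi (by omega)
  | succ j hij ih =>
    have hfy : Commute (yB n i) (f n j) :=
      (commute_f_yB hi (by omega) (by omega) (by omega) (by omega) (by omega)).symm
    rw [yB_succ (by omega) (by omega)]
    exact (hfy.inv_right.mul_right (ih (by omega))).mul_right hfy.inv_right

lemma commute_yB (hi : 1 ≤ i) (hin : i ≤ n) (hj : 1 ≤ j) (hjn : j ≤ n) :
    Commute (yB n i) (yB n j) := by
  rcases lt_trichotomy i j with h | rfl | h
  · exact commute_yB_of_lt hi h hjn
  · exact Commute.refl _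
  · exact (commute_yB_of_lt hj h hin).symm

lemma omB_chain_mul_f_pow {k s : ℕ} (hk : k < n) (hs : s ≤ k) :
    (omB n * chain n (n - 1) (-1) (n - 1 - k) * f n k) ^ s =
      (omB n * chain n (n - 1) (-1) (n - 1 - k)) ^ s * chain n (k - s + 1) 1 s := by
  set Q := chain n (n - 1) (-1) (n - 1 - k)
  induction s with
  | zero => simp
  | succ s ih =>
    set A := chain n (k - (s + 1 : ℕ) + 1) 1 s
    have hAQ : A * Q = Q * A :=
      commute_chain fun u hu => (commute_chain fun t ht => (commute_f (by omega) (by omega)).symm).symm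
    have hAω : chain n (k - s + 1) 1 s * omB n = omB n * A := by
      rw [omB_mul_chain]; congr 2; push_cast; ring
    have hAf : A * f n k = chain n (k - (s + 1 : ℕ) + 1) 1 (s + 1) := by
      rw [chain_succ]; congr 2; push_cast; ring
    rw [pow_succ, ih (by omega), pow_succ, ← hAf]
    calc (omB n * Q) ^ s * chain n (k - s + 1) 1 s * (omB n * Q * f n k)
        = (omB n * Q) ^ s * (chain n (k - s + 1) 1 s * omB n) * Q * f n k := by group
      _ = (omB n * Q) ^ s * omB n * (A * Q) * f n k := by rw [hAω]; group
      _ = _ := by rw [hAQ]; group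

lemma prod_yB_eq_pow {k : ℕ} (hk : k ≤ n) :
    ((List.range k).map fun j => yB n (j + 1)).prod =
      (omB n * chain n (n - 1) (-1) (n - k)) ^ k := by
  induction k with
  | zero => simp
  | succ k ih =>
    have hpow := omB_chain_mul_f_pow (n := n) (show k < n by omega) le_rfl
    rw [sub_self, zero_add, mul_assoc (omB n)] at hpow
    rw [List.prod_range_succ, ih (by omega), yB_eq_chain, Nat.add_sub_cancel,
      chain_sub_one_eq_mul_f (show k < n by omega), show n - (k + 1) = n - 1 - k by omega, hpow]
    simp [pow_succ, mul_assoc]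

/-! ### The permutation representation -/

section Representation

open AffinePerm

variable [Fact (1 < n)]

def permGen : ExtGen n → Equiv.Perm ℤ
  | .f i => adjSwap n i
  | .om => shift

lemma permGen_rels : ∀ r ∈ extRels n, FreeGroup.lift permGen r = 1 := by
  rintro r (⟨i, hn, rfl⟩ | ⟨i, j, h1, h2, h3, rfl⟩ | ⟨i, rfl⟩) <;>
    simp only [map_mul, map_inv, FreeGroup.lift_apply_of, permGen, mul_inv_eq_one]
  · exact adjSwap_braid hn i
  · exact adjSwap_mul_comm h1 h2 h3
  · rw [shift_mul_adjSwap, mul_inv_cancel_right]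

def toPerm (n : ℕ) [Fact (1 < n)] : BrExt n →* Equiv.Perm ℤ :=
  PresentedGroup.toGroup permGen_rels

lemma toPerm_f (a : ℤ) : toPerm n (f n a) = adjSwap n a := PresentedGroup.toGroup.of _

lemma toPerm_omB : toPerm n (omB n) = shift := PresentedGroup.toGroup.of _

lemma toPerm_chain_apply {b x : ℤ} {m : ℕ} (hm : m < n) (h1 : b - m < x) (h2 : x ≤ b - m + n) :
    toPerm n (chain n b (-1) m) x =
      if x = b - m + 1 then b + 1 else if x ≤ b + 1 then x - 1 else x := by
  induction m generalizing b with
  | zero => simp; omega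
  | succ m ih =>
    rw [chain_succ', map_mul, Equiv.Perm.mul_apply, ih (by omega) (by push_cast at h1 ⊢; omega)
      (by push_cast at h2 ⊢; omega), toPerm_f]
    push_cast at h1 h2 ⊢
    simp (disch := omega) only [adjSwap_intCast_apply]
    omega

lemma toPerm_yB_one : toPerm n (yB n 1) = transl n (.ofAdd (Pi.single 1 1)) := by
  have hn : 1 < n := Fact.out
  ext x
  -- `c ≡ n - 1` is chosen so that `x` lies in the window `(c - n + 1, c + 1]` of `toPerm_chain_apply`
  obtain ⟨c, hc, hcx, hxc⟩ := ZMod.exists_intCast_eq_le_lt_add ((n - 1 : ℤ) : ZMod n) (x + n - 2)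
  have hx1 : (x : ZMod n) = 1 ↔ x = c - n + 2 := by
    rw [show (1 : ZMod n) = ((c - n + 2 : ℤ) : ZMod n) by push_cast [hc]; ring]
    exact ZMod.intCast_eq_intCast_iff_of_lt (by omega) (by omega)
  rw [yB_eq_chain, chain_congr hc.symm, Nat.sub_self, chain_zero, inv_one, one_mul, map_mul,
    toPerm_omB, Equiv.Perm.mul_apply, toPerm_chain_apply (by omega) (by omega) (by omega),
    transl_apply, toAdd_ofAdd, Pi.single_apply]
  simp only [shift, Equiv.coe_addRight, hx1]
  split_ifs <;> omega

lemma toPerm_yB (h1 : 1 ≤ i) (h2 : i ≤ n) :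
    toPerm n (yB n i) = transl n (.ofAdd (Pi.single (i : ZMod n) 1)) := by
  induction i, h1 using Nat.le_induction with
  | base => simpa using toPerm_yB_one
  | succ i hi ih =>
    have hswap : Pi.single (i : ZMod n) (1 : ℤ) ∘ Equiv.swap (i : ZMod n) (i + 1) =
        Pi.single ((i + 1 : ℕ) : ZMod n) 1 := by
      ext ρ
      simp [Pi.single_apply, Equiv.swap_apply_eq_iff]
    rw [yB_succ hi (by omega), map_mul, map_mul, map_inv, toPerm_f, Int.cast_natCast, adjSwap_inv,
      ih (by omega), adjSwap_mul_transl_mul_adjSwap, hswap]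

lemma toPerm_wB (lam : Fin n → ℤ) :
    toPerm n (wB n lam) =
      transl n (.ofAdd (∑ k : Fin n, Pi.single (((k : ℕ) + 1 : ℕ) : ZMod n) (lam k))) := by
  rw [wB, map_list_prod, List.map_ofFn, ofAdd_sum, ← List.prod_ofFn, map_list_prod, List.map_ofFn]
  congr 2
  funext k
  rw [Function.comp_apply, Function.comp_apply, map_zpow, toPerm_yB (by omega) (by omega),
    ← map_zpow, ← ofAdd_zsmul]
  congr
  ext ρ
  simp [Pi.single_apply]

lemma toPerm_wB_apply (lam : Fin n → ℤ) (k : Fin n) :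
    toPerm n (wB n lam) ((k : ℕ) + 1) = (k : ℕ) + 1 + n * lam k := by
  have hinj (j : Fin n) : ((k : ℕ) : ZMod n) = ((j : ℕ) : ZMod n) ↔ k = j := by
    rw [ZMod.natCast_eq_natCast_iff', Nat.mod_eq_of_lt k.2, Nat.mod_eq_of_lt j.2, Fin.val_inj]
  rw [toPerm_wB, transl_apply, toAdd_ofAdd, Finset.sum_apply]
  simp [Pi.single_apply, hinj]

lemma wB_injective : Function.Injective (wB n) := by
  have hn : n ≠ 0 := by have : 1 < n := Fact.out; omega
  intro lam mu h
  funext k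
  have := congrArg (fun w => toPerm n w ((k : ℕ) + 1)) h
  simpa [toPerm_wB_apply, hn] using this

end Representation

end BrExt

theorem statement_8 (n : ℕ) (hn : 2 ≤ n) :
    -- (a) the elements `y_1, …, y_n` pairwise commute
    (∀ i j : ℕ, 1 ≤ i → i ≤ n → 1 ≤ j → j ≤ n → yB n i * yB n j = yB n j * yB n i) ∧
    -- (b) `y_1 y_2 ⋯ y_n = ω^n`
    ((List.range n).map (fun k => yB n (k + 1))).prod = omB n ^ n ∧
    -- (c) `λ ↦ w_λ` is injective on `ℤ^n`
    Function.Injective (wB n) := by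
  have : Fact (1 < n) := ⟨hn⟩
  refine ⟨fun i j hi hin hj hjn => (BrExt.commute_yB hi hin hj hjn).eq, ?_, BrExt.wB_injective⟩
  simpa using BrExt.prod_yB_eq_pow (n := n) le_rfl
end

section
/- For λ = (x_1, …, x_n) ∈ ℤ^n, the element w_λ lies in the subgroup Br_aff of Br_extg generated by {f_i : i ∈ ℤ/nℤ} if and only if x_1 + x_2 + ⋯ + x_n = 0. -/
/-
Sending every `f_i` to `0` and `ω` to `1` respects the relations, giving a degree map
`Br_extg → ℤ` with `Br_aff` in its kernel. Each `y_i` is `ω` up to factors `f_j^{±1}`, so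
`w_λ` has degree `∑ x_i`, which settles one direction. Conversely, `Br_aff` is normal
because conjugation by `ω` permutes the `f_i`; in the quotient by it every `y_i` becomes the
image of `ω`, so `w_λ` becomes that image to the power `∑ x_i`.
-/

theorem List.prod_ofFn_zpow {G : Type*} [Group G] (g : G) :
    ∀ {m : ℕ} (e : Fin m → ℤ), (List.ofFn fun k => g ^ e k).prod = g ^ ∑ k, e k
  | 0, _ => by simp
  | _ + 1, e => by
    rw [List.ofFn_succ, List.prod_cons, List.prod_ofFn_zpow g, Fin.sum_univ_succ, zpow_add]

section BrExt

variable {n : ℕ}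

theorem conj_omB_fB (i : ZMod n) : MulAut.conj (omB n) (fB n i) = fB n (i + 1) :=
  PresentedGroup.mk_eq_mk_of_mul_inv_mem (Or.inr (Or.inr ⟨i, rfl⟩))

theorem closure_range_fB_normal : (Subgroup.closure (Set.range (fB n))).Normal := by
  have hω : omB n ∈ Subgroup.normalizer (Set.range (fB n)) := by
    rw [Subgroup.mem_normalizer_iff_conj_image_eq, ← Set.range_comp]
    have : ⇑(MulAut.conj (omB n)) ∘ fB n = fB n ∘ (· + 1) := funext conj_omB_fB
    rw [this, (add_right_surjective (1 : ZMod n)).range_comp]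
  rw [← Subgroup.normalizer_eq_top_iff, eq_top_iff, ← PresentedGroup.closure_range_of,
    Subgroup.closure_le]
  rintro _ ⟨x | x, rfl⟩
  · exact Subgroup.le_normalizer (Subgroup.subset_closure ⟨x, rfl⟩)
  · exact Subgroup.normalizer_le_normalizer_closure _ hω

variable {G : Type*} [Group G] {φ : BrExt n →* G}

theorem map_yB_of_map_fB (hφ : ∀ i, φ (fB n i) = 1) (i : ℕ) : φ (yB n i) = φ (omB n) := by
  simp [yB, map_list_prod, Function.comp_def, hφ]

theorem map_wB_of_map_fB (hφ : ∀ i, φ (fB n i) = 1) (lam : Fin n → ℤ) :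
    φ (wB n lam) = φ (omB n) ^ ∑ i, lam i := by
  simp only [wB, map_list_prod, List.map_ofFn, Function.comp_def, map_zpow,
    map_yB_of_map_fB hφ, List.prod_ofFn_zpow]

noncomputable def degB (n : ℕ) : BrExt n →* Multiplicative ℤ :=
  PresentedGroup.toGroup (f := fun
      | ExtGen.f _ => 1
      | ExtGen.om => Multiplicative.ofAdd 1)
    (by rintro r (⟨i, _, rfl⟩ | ⟨i, j, _, _, _, rfl⟩ | ⟨i, rfl⟩) <;> simp)

theorem degB_fB (i : ZMod n) : degB n (fB n i) = 1 :=
  PresentedGroup.toGroup.of _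

theorem degB_omB : degB n (omB n) = Multiplicative.ofAdd 1 :=
  PresentedGroup.toGroup.of _

theorem closure_range_fB_le_ker_degB : Subgroup.closure (Set.range (fB n)) ≤ (degB n).ker :=
  (Subgroup.closure_le _).2 (Set.range_subset_iff.2 degB_fB)

end BrExt

theorem statement_10_general (n : ℕ) (lam : Fin n → ℤ) :
    wB n lam ∈ Subgroup.closure (Set.range (fB n)) ↔ (∑ i : Fin n, lam i) = 0 := by
  set N := Subgroup.closure (Set.range (fB n))
  have : N.Normal := closure_range_fB_normal
  constructor
  · intro hw
    have hdeg := closure_range_fB_le_ker_degB hw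
    rwa [MonoidHom.mem_ker, map_wB_of_map_fB degB_fB, degB_omB, ← ofAdd_zsmul, smul_eq_mul,
      mul_one, ofAdd_eq_one] at hdeg
  · intro hsum
    have hπ : ∀ i, QuotientGroup.mk' N (fB n i) = 1 := fun i =>
      (QuotientGroup.eq_one_iff _).2 (Subgroup.subset_closure ⟨i, rfl⟩)
    rw [← QuotientGroup.eq_one_iff, ← QuotientGroup.mk'_apply, map_wB_of_map_fB hπ, hsum,
      zpow_zero]

theorem statement_10 (n : ℕ) (hn : 2 ≤ n) (lam : Fin n → ℤ) :
    wB n lam ∈ Subgroup.closure (Set.range (fB n)) ↔ (∑ i : Fin n, lam i) = 0 :=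
  statement_10_general n lam
end

section
/- Assume φ : F → F' is an isomorphism. Let Y be the cochain complex which agrees with X outside the four indicated degrees and in those degrees is A → B → C → D with differentials a, c − e∘φ^{−1}∘d, and f. Then Y is a cochain complex, and X and Y are homotopy equivalent. Explicitly, the degreewise maps α : X → Y (identity outside the indicated degrees, (id_B, 0) : B⊕F → B, and (id_C, −e∘φ^{−1}) : C⊕F' → C) and β : Y → X (identity outside, (id_B, −φ^{−1}∘d)ᵗ : B → B⊕F, and (id_C, 0)ᵗ : C → C⊕F') are chain maps satisfying α∘β = id_Y and id_X − β∘α = d_X∘q + q∘d_X, where q : X → X of homological degree −1 is φ^{−1} : F' → F on the indicated summands and zero otherwise. -/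
/-!
STATEMENT 11 (Gaussian elimination in an additive category).
A cochain complex `X` in an additive category `𝒜` which, in the four consecutive
degrees `0, 1, 2, 3`, has the form `A ⟶ B ⊞ F ⟶ C ⊞ F' ⟶ D` (with `A = V 0`,
`D = V 3`, and with arbitrary objects `V i` and differentials `dV i` elsewhere),
with differential components `a : A ⟶ B`, `b : A ⟶ F`, `c : B ⟶ C`, `dm : B ⟶ F'`,
`e : F ⟶ C`, `φ : F ⟶ F'`, `f : C ⟶ D`, `g : F' ⟶ D`, where `φ` is an isomorphism.
-/

open CategoryTheory CategoryTheory.Limits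

universe v u

variable {𝒜 : Type u} [Category.{v} 𝒜] [Preadditive 𝒜] [HasBinaryBiproducts 𝒜]

/-- A ℤ-indexed family of objects with degree-one maps (a complex without the
condition `d² = 0`). -/
structure PreCx (𝒜 : Type u) [Category.{v} 𝒜] [Preadditive 𝒜] : Type (max u v) where
  obj : ℤ → 𝒜
  d : ∀ i : ℤ, obj i ⟶ obj (i + 1)

/-- `X` is a cochain complex: `d² = 0`. -/
def PreCx.IsComplex (X : PreCx 𝒜) : Prop := ∀ i, X.d i ≫ X.d (i + 1) = 0

/-- `α` is a chain map from `X` to `Y`. -/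
def PreCx.IsChainMap (X Y : PreCx 𝒜) (α : ∀ i, X.obj i ⟶ Y.obj i) : Prop :=
  ∀ i, X.d i ≫ α (i + 1) = α i ≫ Y.d i

/-- The objects of the complex `X`: `B ⊞ F` in degree 1, `C ⊞ F'` in degree 2,
arbitrary objects (`V i`, with `A = V 0` and `D = V 3`) elsewhere. -/
noncomputable def wObjX (V : ℤ → 𝒜) (B F C F' : 𝒜) (i : ℤ) : 𝒜 :=
  if i = 1 then B ⊞ F else if i = 2 then C ⊞ F' else V i

/-- The differential of `X`: `(a, b)ᵗ` in degree 0; the matrix `(c, dm; e, φ)`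
in degree 1; `(f, g)` in degree 2; arbitrary (`dV`) elsewhere. -/
noncomputable def wdX (V : ℤ → 𝒜) (dV : ∀ i, V i ⟶ V (i + 1)) (B F C F' : 𝒜)
    (a : V 0 ⟶ B) (b : V 0 ⟶ F) (c : B ⟶ C) (dm : B ⟶ F') (e : F ⟶ C)
    (φ : F ⟶ F') (f : C ⟶ V 3) (g : F' ⟶ V 3) (i : ℤ) :
    wObjX V B F C F' i ⟶ wObjX V B F C F' (i + 1) :=
  if h0 : i = 0 then
    eqToHom (by subst h0; rfl) ≫ biprod.lift a b ≫ eqToHom (by subst h0; rfl)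
  else if h1 : i = 1 then
    eqToHom (by subst h1; rfl) ≫
      biprod.lift (biprod.desc c e) (biprod.desc dm φ) ≫ eqToHom (by subst h1; rfl)
  else if h2 : i = 2 then
    eqToHom (by subst h2; rfl) ≫ biprod.desc f g ≫ eqToHom (by subst h2; rfl)
  else
    eqToHom (by unfold wObjX; rw [if_neg h1, if_neg h2]) ≫ dV i ≫
      eqToHom (by unfold wObjX; rw [if_neg (by omega : ¬(i + 1 = 1)), if_neg (by omega : ¬(i + 1 = 2))])

/-- The complex `X`. -/
noncomputable def Xcx (V : ℤ → 𝒜) (dV : ∀ i, V i ⟶ V (i + 1)) (B F C F' : 𝒜)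
    (a : V 0 ⟶ B) (b : V 0 ⟶ F) (c : B ⟶ C) (dm : B ⟶ F') (e : F ⟶ C)
    (φ : F ⟶ F') (f : C ⟶ V 3) (g : F' ⟶ V 3) : PreCx 𝒜 :=
  ⟨wObjX V B F C F', wdX V dV B F C F' a b c dm e φ f g⟩

/-- The objects of the reduced complex `Y`: `B` in degree 1, `C` in degree 2,
agreeing with `X` elsewhere. -/
noncomputable def wObjY (V : ℤ → 𝒜) (B C : 𝒜) (i : ℤ) : 𝒜 :=
  if i = 1 then B else if i = 2 then C else V i

/-- The differential of `Y`: `a` in degree 0, `c − e ∘ φ⁻¹ ∘ dm` in degree 1,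
`f` in degree 2, agreeing with `X` elsewhere. -/
noncomputable def wdY (V : ℤ → 𝒜) (dV : ∀ i, V i ⟶ V (i + 1)) (B F C F' : 𝒜)
    (a : V 0 ⟶ B) (c : B ⟶ C) (dm : B ⟶ F') (e : F ⟶ C)
    (φ : F ⟶ F') [IsIso φ] (f : C ⟶ V 3) (i : ℤ) :
    wObjY V B C i ⟶ wObjY V B C (i + 1) :=
  if h0 : i = 0 then
    eqToHom (by subst h0; rfl) ≫ a ≫ eqToHom (by subst h0; rfl)
  else if h1 : i = 1 then
    eqToHom (by subst h1; rfl) ≫ (c - dm ≫ inv φ ≫ e) ≫ eqToHom (by subst h1; rfl)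
  else if h2 : i = 2 then
    eqToHom (by subst h2; rfl) ≫ f ≫ eqToHom (by subst h2; rfl)
  else
    eqToHom (by unfold wObjY; rw [if_neg h1, if_neg h2]) ≫ dV i ≫
      eqToHom (by unfold wObjY; rw [if_neg (by omega : ¬(i + 1 = 1)), if_neg (by omega : ¬(i + 1 = 2))])

/-- The complex `Y`. -/
noncomputable def Ycx (V : ℤ → 𝒜) (dV : ∀ i, V i ⟶ V (i + 1)) (B F C F' : 𝒜)
    (a : V 0 ⟶ B) (c : B ⟶ C) (dm : B ⟶ F') (e : F ⟶ C)
    (φ : F ⟶ F') [IsIso φ] (f : C ⟶ V 3) : PreCx 𝒜 :=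
  ⟨wObjY V B C, wdY V dV B F C F' a c dm e φ f⟩

/-- The chain map `α : X ⟶ Y`: the identity outside the indicated degrees,
`(id_B, 0)` in degree 1, and `(id_C, −e ∘ φ⁻¹)` in degree 2. -/
noncomputable def αmap (V : ℤ → 𝒜) (B F C F' : 𝒜) (e : F ⟶ C) (φ : F ⟶ F') [IsIso φ]
    (i : ℤ) : wObjX V B F C F' i ⟶ wObjY V B C i :=
  if h1 : i = 1 then
    eqToHom (by subst h1; rfl) ≫ biprod.fst ≫ eqToHom (by subst h1; rfl)
  else if h2 : i = 2 then
    eqToHom (by subst h2; rfl) ≫ biprod.desc (𝟙 C) (-(inv φ ≫ e)) ≫ eqToHom (by subst h2; rfl)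
  else
    eqToHom (by unfold wObjX wObjY; simp only [if_neg h1, if_neg h2])

/-- The chain map `β : Y ⟶ X`: the identity outside the indicated degrees,
`(id_B, −φ⁻¹ ∘ dm)ᵗ` in degree 1, and `(id_C, 0)ᵗ` in degree 2. -/
noncomputable def βmap (V : ℤ → 𝒜) (B F C F' : 𝒜) (dm : B ⟶ F') (φ : F ⟶ F') [IsIso φ]
    (i : ℤ) : wObjY V B C i ⟶ wObjX V B F C F' i :=
  if h1 : i = 1 then
    eqToHom (by subst h1; rfl) ≫ biprod.lift (𝟙 B) (-(dm ≫ inv φ)) ≫ eqToHom (by subst h1; rfl)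
  else if h2 : i = 2 then
    eqToHom (by subst h2; rfl) ≫ biprod.lift (𝟙 C) 0 ≫ eqToHom (by subst h2; rfl)
  else
    eqToHom (by unfold wObjX wObjY; simp only [if_neg h1, if_neg h2])

/-- The homotopy `q` (of homological degree `−1`): `φ⁻¹ : F' ⟶ F` on the indicated
summands (from degree 2 to degree 1) and zero otherwise. -/
noncomputable def qmap (V : ℤ → 𝒜) (B F C F' : 𝒜) (φ : F ⟶ F') [IsIso φ] (i : ℤ) :
    wObjX V B F C F' (i + 1) ⟶ wObjX V B F C F' i :=
  if h1 : i = 1 then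
    eqToHom (by subst h1; rfl) ≫
      biprod.lift (0 : C ⊞ F' ⟶ B) (biprod.desc (0 : C ⟶ F) (inv φ)) ≫
      eqToHom (by subst h1; rfl)
  else 0

/-!
Since `φ` is invertible, `d ≫ d = 0` on `A` and on `B ⊞ F` can be solved for
`b = -(a ≫ dm ≫ φ⁻¹)` and `g = -(φ⁻¹ ≫ e ≫ f)`. With these, `α` and `β` commute with the
differentials: a check of `2 × 2` matrix identities in degrees `0, 1, 2`, all maps being identities
elsewhere. The identities `β ≫ α = 𝟙` and `𝟙 - α ≫ β = d ≫ q + q ≫ d` need no relation at all.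
Finally `Y` is a complex because `β` is a section of the chain map `α`:
`d_Y ≫ d_Y = β ≫ α ≫ d_Y ≫ d_Y = β ≫ d_X ≫ d_X ≫ α = 0`.
-/

lemma PreCx.IsComplex.of_isChainMap_of_comp_eq_id {𝒞 : Type*} [Category 𝒞] [Preadditive 𝒞]
    {X Y : PreCx 𝒞} {α : ∀ i, X.obj i ⟶ Y.obj i} {β : ∀ i, Y.obj i ⟶ X.obj i} (hX : X.IsComplex)
    (hα : PreCx.IsChainMap X Y α) (hβα : ∀ i, β i ≫ α i = 𝟙 (Y.obj i)) : Y.IsComplex := by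
  intro i
  calc Y.d i ≫ Y.d (i + 1) = β i ≫ α i ≫ Y.d i ≫ Y.d (i + 1) := by rw [reassoc_of% (hβα i)]
    _ = β i ≫ (X.d i ≫ X.d (i + 1)) ≫ α (i + 1 + 1) := by
      rw [← reassoc_of% (hα i), ← hα (i + 1), Category.assoc]
    _ = 0 := by rw [hX i]; simp

namespace GaussianElimination

variable {𝒞 : Type*} [Category 𝒞] [Preadditive 𝒞] [HasBinaryBiproducts 𝒞]
  {A B F C F' D : 𝒞} {a : A ⟶ B} {b : A ⟶ F} {c : B ⟶ C} {dm : B ⟶ F'} {e : F ⟶ C}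
  {φ : F ⟶ F'} {f : C ⟶ D} {g : F' ⟶ D} [IsIso φ]

lemma lift_desc_comp_desc_id_neg :
    biprod.lift (biprod.desc c e) (biprod.desc dm φ) ≫ biprod.desc (𝟙 C) (-(inv φ ≫ e)) =
      biprod.fst ≫ (c - dm ≫ inv φ ≫ e) := by
  ext <;> simp [sub_eq_add_neg]

lemma desc_eq_desc_id_neg_comp (he : e ≫ f + φ ≫ g = 0) :
    biprod.desc f g = biprod.desc (𝟙 C) (-(inv φ ≫ e)) ≫ f := by
  have hg : g = -(inv φ ≫ e ≫ f) := by simp [eq_neg_of_add_eq_zero_left he]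
  ext <;> simp [hg]

lemma comp_lift_id_neg (hd : a ≫ dm + b ≫ φ = 0) :
    a ≫ biprod.lift (𝟙 B) (-(dm ≫ inv φ)) = biprod.lift a b := by
  have hb : b = -(a ≫ dm ≫ inv φ) := by
    simp [← Category.assoc, eq_neg_of_add_eq_zero_left hd]
  ext <;> simp [hb]

lemma lift_id_neg_comp_lift_desc :
    biprod.lift (𝟙 B) (-(dm ≫ inv φ)) ≫ biprod.lift (biprod.desc c e) (biprod.desc dm φ) =
      (c - dm ≫ inv φ ≫ e) ≫ biprod.lift (𝟙 C) 0 := by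
  ext <;> simp [sub_eq_add_neg]

lemma id_sub_fst_comp_lift_id_neg :
    𝟙 (B ⊞ F) - biprod.fst ≫ biprod.lift (𝟙 B) (-(dm ≫ inv φ)) =
      biprod.lift (biprod.desc c e) (biprod.desc dm φ) ≫
        biprod.lift 0 (biprod.desc 0 (inv φ)) := by
  ext <;> simp

lemma id_sub_desc_id_neg_comp_lift_id_zero :
    𝟙 (C ⊞ F') - biprod.desc (𝟙 C) (-(inv φ ≫ e)) ≫ biprod.lift (𝟙 C) 0 =
      biprod.lift 0 (biprod.desc 0 (inv φ)) ≫
        biprod.lift (biprod.desc c e) (biprod.desc dm φ) := by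
  ext <;> simp

end GaussianElimination

lemma wObjY_of_ne {T : Type*} {V : ℤ → T} {B C : T} {i : ℤ} (h1 : i ≠ 1) (h2 : i ≠ 2) :
    wObjY V B C i = V i := by
  simp [wObjY, h1, h2]

section ReducedComplex

variable {𝒞 : Type*} [Category 𝒞] [Preadditive 𝒞] {V : ℤ → 𝒞} {dV : ∀ i, V i ⟶ V (i + 1)}
  {B F C F' : 𝒞} {a : V 0 ⟶ B} {c : B ⟶ C} {dm : B ⟶ F'} {e : F ⟶ C} {φ : F ⟶ F'} [IsIso φ]
  {f : C ⟶ V 3}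

lemma wdY_of_ne {i : ℤ} (h0 : i ≠ 0) (h1 : i ≠ 1) (h2 : i ≠ 2) :
    wdY V dV B F C F' a c dm e φ f i =
      eqToHom (wObjY_of_ne h1 h2) ≫ dV i ≫ eqToHom (wObjY_of_ne (by omega) (by omega)).symm := by
  simp [wdY, h0, h1, h2]

-- In degrees `0, 1, 2, 3` the objects reduce definitionally, so the `eqToHom` factors in the
-- definitions are identities up to defeq.
lemma wdY_zero : wdY V dV B F C F' a c dm e φ f 0 = a :=
  (Category.id_comp _).trans (Category.comp_id _)

lemma wdY_one : wdY V dV B F C F' a c dm e φ f 1 = c - dm ≫ inv φ ≫ e :=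
  (Category.id_comp _).trans (Category.comp_id _)

lemma wdY_two : wdY V dV B F C F' a c dm e φ f 2 = f :=
  (Category.id_comp _).trans (Category.comp_id _)

end ReducedComplex

section Unfolding

variable {V : ℤ → 𝒜} {dV : ∀ i, V i ⟶ V (i + 1)} {B F C F' : 𝒜}
  {a : V 0 ⟶ B} {b : V 0 ⟶ F} {c : B ⟶ C} {dm : B ⟶ F'} {e : F ⟶ C}
  {φ : F ⟶ F'} {f : C ⟶ V 3} {g : F' ⟶ V 3}

lemma wObjX_of_ne {i : ℤ} (h1 : i ≠ 1) (h2 : i ≠ 2) : wObjX V B F C F' i = V i := by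
  simp [wObjX, h1, h2]

lemma wdX_of_ne {i : ℤ} (h0 : i ≠ 0) (h1 : i ≠ 1) (h2 : i ≠ 2) :
    wdX V dV B F C F' a b c dm e φ f g i =
      eqToHom (wObjX_of_ne h1 h2) ≫ dV i ≫ eqToHom (wObjX_of_ne (by omega) (by omega)).symm := by
  simp [wdX, h0, h1, h2]

lemma wdX_zero : wdX V dV B F C F' a b c dm e φ f g 0 = biprod.lift a b :=
  (Category.id_comp _).trans (Category.comp_id _)

lemma wdX_one :
    wdX V dV B F C F' a b c dm e φ f g 1 = biprod.lift (biprod.desc c e) (biprod.desc dm φ) :=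
  (Category.id_comp _).trans (Category.comp_id _)

lemma wdX_two : wdX V dV B F C F' a b c dm e φ f g 2 = biprod.desc f g :=
  (Category.id_comp _).trans (Category.comp_id _)

variable [IsIso φ]

lemma αmap_of_ne {i : ℤ} (h1 : i ≠ 1) (h2 : i ≠ 2) :
    αmap V B F C F' e φ i = eqToHom ((wObjX_of_ne h1 h2).trans (wObjY_of_ne h1 h2).symm) := by
  simp [αmap, h1, h2]

lemma αmap_zero : αmap V B F C F' e φ 0 = 𝟙 (V 0) := rfl

lemma αmap_one : αmap V B F C F' e φ 1 = biprod.fst :=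
  (Category.id_comp _).trans (Category.comp_id _)

lemma αmap_two : αmap V B F C F' e φ 2 = biprod.desc (𝟙 C) (-(inv φ ≫ e)) :=
  (Category.id_comp _).trans (Category.comp_id _)

lemma αmap_three : αmap V B F C F' e φ 3 = 𝟙 (V 3) := rfl

lemma βmap_of_ne {i : ℤ} (h1 : i ≠ 1) (h2 : i ≠ 2) :
    βmap V B F C F' dm φ i = eqToHom ((wObjY_of_ne h1 h2).trans (wObjX_of_ne h1 h2).symm) := by
  simp [βmap, h1, h2]

lemma βmap_zero : βmap V B F C F' dm φ 0 = 𝟙 (V 0) := rfl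

lemma βmap_one : βmap V B F C F' dm φ 1 = biprod.lift (𝟙 B) (-(dm ≫ inv φ)) :=
  (Category.id_comp _).trans (Category.comp_id _)

lemma βmap_two : βmap V B F C F' dm φ 2 = biprod.lift (𝟙 C) 0 :=
  (Category.id_comp _).trans (Category.comp_id _)

lemma βmap_three : βmap V B F C F' dm φ 3 = 𝟙 (V 3) := rfl

lemma qmap_of_ne {i : ℤ} (h1 : i ≠ 1) : qmap V B F C F' φ i = 0 := by
  simp [qmap, h1]

lemma qmap_one : qmap V B F C F' φ 1 = biprod.lift 0 (biprod.desc 0 (inv φ)) :=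
  (Category.id_comp _).trans (Category.comp_id _)

end Unfolding

section Reduction

open GaussianElimination

variable {V : ℤ → 𝒜} {dV : ∀ i, V i ⟶ V (i + 1)} {B F C F' : 𝒜}
  {a : V 0 ⟶ B} {b : V 0 ⟶ F} {c : B ⟶ C} {dm : B ⟶ F'} {e : F ⟶ C}
  {φ : F ⟶ F'} [IsIso φ] {f : C ⟶ V 3} {g : F' ⟶ V 3}

lemma αmap_isChainMap (hX : (Xcx V dV B F C F' a b c dm e φ f g).IsComplex) :
    PreCx.IsChainMap (Xcx V dV B F C F' a b c dm e φ f g) (Ycx V dV B F C F' a c dm e φ f)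
      (αmap V B F C F' e φ) := by
  have he : e ≫ f + φ ≫ g = 0 := by
    have h : biprod.lift (biprod.desc c e) (biprod.desc dm φ) ≫ biprod.desc f g = 0 := by
      have h1 := hX 1
      dsimp only [Xcx, Int.reduceAdd] at h1
      rwa [wdX_one, wdX_two] at h1
    simpa using biprod.inr ≫= h
  intro i
  obtain rfl | rfl | rfl | ⟨h0, h1, h2⟩ :
      i = 0 ∨ i = 1 ∨ i = 2 ∨ (i ≠ 0 ∧ i ≠ 1 ∧ i ≠ 2) := by omega
  all_goals dsimp only [Xcx, Ycx, Int.reduceAdd]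
  · rw [wdX_zero, αmap_one, αmap_zero, wdY_zero]
    simp [wObjX, wObjY]
  · rw [wdX_one, αmap_two, αmap_one, wdY_one]
    exact lift_desc_comp_desc_id_neg
  · rw [wdX_two, αmap_three, αmap_two, wdY_two, desc_eq_desc_id_neg_comp he]
    simp [wObjX, wObjY]
  · rw [wdX_of_ne h0 h1 h2, αmap_of_ne (by omega) (by omega), αmap_of_ne h1 h2,
      wdY_of_ne h0 h1 h2]
    simp

lemma βmap_isChainMap (hX : (Xcx V dV B F C F' a b c dm e φ f g).IsComplex) :
    PreCx.IsChainMap (Ycx V dV B F C F' a c dm e φ f) (Xcx V dV B F C F' a b c dm e φ f g)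
      (βmap V B F C F' dm φ) := by
  have hd : a ≫ dm + b ≫ φ = 0 := by
    have h : biprod.lift a b ≫ biprod.lift (biprod.desc c e) (biprod.desc dm φ) = 0 := by
      have h0 := hX 0
      dsimp only [Xcx, Int.reduceAdd] at h0
      rwa [wdX_zero, wdX_one] at h0
    simpa using h =≫ biprod.snd
  intro i
  obtain rfl | rfl | rfl | ⟨h0, h1, h2⟩ :
      i = 0 ∨ i = 1 ∨ i = 2 ∨ (i ≠ 0 ∧ i ≠ 1 ∧ i ≠ 2) := by omega
  all_goals dsimp only [Xcx, Ycx, Int.reduceAdd]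
  · rw [wdY_zero, βmap_one, βmap_zero, wdX_zero]
    simp [wObjX, wObjY, comp_lift_id_neg hd]
  · rw [wdY_one, βmap_two, βmap_one, wdX_one]
    exact lift_id_neg_comp_lift_desc.symm
  · rw [wdY_two, βmap_three, βmap_two, wdX_two]
    simp [wObjX, wObjY]
  · rw [wdY_of_ne h0 h1 h2, βmap_of_ne (by omega) (by omega), βmap_of_ne h1 h2,
      wdX_of_ne h0 h1 h2]
    simp

lemma βmap_comp_αmap (i : ℤ) :
    βmap V B F C F' dm φ i ≫ αmap V B F C F' e φ i = 𝟙 (wObjY V B C i) := by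
  obtain rfl | rfl | ⟨h1, h2⟩ : i = 1 ∨ i = 2 ∨ (i ≠ 1 ∧ i ≠ 2) := by omega
  · rw [βmap_one, αmap_one]
    simp [wObjX, wObjY]
  · rw [βmap_two, αmap_two]
    simp [wObjX, wObjY]
  · rw [βmap_of_ne h1 h2, αmap_of_ne h1 h2]
    simp

lemma id_sub_αmap_comp_βmap (i : ℤ) :
    𝟙 (wObjX V B F C F' (i + 1)) - αmap V B F C F' e φ (i + 1) ≫ βmap V B F C F' dm φ (i + 1) =
      wdX V dV B F C F' a b c dm e φ f g (i + 1) ≫ qmap V B F C F' φ (i + 1) +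
        qmap V B F C F' φ i ≫ wdX V dV B F C F' a b c dm e φ f g i := by
  obtain rfl | rfl | ⟨h0, h1⟩ : i = 0 ∨ i = 1 ∨ (i ≠ 0 ∧ i ≠ 1) := by omega
  · dsimp only [Int.reduceAdd]
    rw [qmap_of_ne zero_ne_one, zero_comp, add_zero, αmap_one, βmap_one, wdX_one, qmap_one]
    exact id_sub_fst_comp_lift_id_neg
  · dsimp only [Int.reduceAdd]
    rw [qmap_of_ne (by norm_num), comp_zero, zero_add, αmap_two, βmap_two, wdX_one, qmap_one]
    exact id_sub_desc_id_neg_comp_lift_id_zero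
  · rw [αmap_of_ne (by omega) (by omega), βmap_of_ne (by omega) (by omega),
      qmap_of_ne (by omega), qmap_of_ne h1]
    simp

end Reduction

theorem statement_11 (V : ℤ → 𝒜) (dV : ∀ i, V i ⟶ V (i + 1)) (B F C F' : 𝒜)
    (a : V 0 ⟶ B) (b : V 0 ⟶ F) (c : B ⟶ C) (dm : B ⟶ F') (e : F ⟶ C)
    (φ : F ⟶ F') [IsIso φ] (f : C ⟶ V 3) (g : F' ⟶ V 3)
    (hX : (Xcx V dV B F C F' a b c dm e φ f g).IsComplex) :
    -- `Y` is a cochain complex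
    (Ycx V dV B F C F' a c dm e φ f).IsComplex ∧
    -- `α` and `β` are chain maps
    PreCx.IsChainMap (Xcx V dV B F C F' a b c dm e φ f g) (Ycx V dV B F C F' a c dm e φ f)
      (αmap V B F C F' e φ) ∧
    PreCx.IsChainMap (Ycx V dV B F C F' a c dm e φ f) (Xcx V dV B F C F' a b c dm e φ f g)
      (βmap V B F C F' dm φ) ∧
    -- `α ∘ β = id_Y`
    (∀ i, βmap V B F C F' dm φ i ≫ αmap V B F C F' e φ i = 𝟙 (wObjY V B C i)) ∧
    -- `id_X − β ∘ α = d_X ∘ q + q ∘ d_X`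
    (∀ i, 𝟙 (wObjX V B F C F' (i + 1)) -
        αmap V B F C F' e φ (i + 1) ≫ βmap V B F C F' dm φ (i + 1) =
      wdX V dV B F C F' a b c dm e φ f g (i + 1) ≫ qmap V B F C F' φ (i + 1) +
        qmap V B F C F' φ i ≫ wdX V dV B F C F' a b c dm e φ f g i) :=
  have hα := αmap_isChainMap hX
  have hβα : ∀ i, βmap V B F C F' dm φ i ≫ αmap V B F C F' e φ i = 𝟙 _ := βmap_comp_αmap
  ⟨hX.of_isChainMap_of_comp_eq_id hα hβα, hα, βmap_isChainMap hX, hβα, id_sub_αmap_comp_βmap⟩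
end
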